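/- arXiv:2012.04389 — 15 statements merged into one kernel-verified Lean document; each statement's English description precedes it below -/
import Mathlib

section
/- If D is a subset of a group G containing the identity, closed under inverses, and such that G is covered by n left translates of D, then D^{3n} equals the subgroup generated by D (where D^k denotes the set of products of k elements of D). -/
/-!
Let `I_k` be the set of indices `i` for which `g_i D` meets `D^k`. If `g_i D` meets `D^k` then
`g_i ∈ D^(k+1)`, so `g_i D ⊆ D^(k+2)`. Hence if `D^(k+3) ≠ D^(k+2)`, a point of `D^(k+3) \ D^(k+2)`
lies in some `g_i D` with `i ∈ I_(k+3) \ I_k`. Since `I_0 ≠ ∅` and there are only `n` indices, the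
chain `I_0 ⊆ I_3 ⊆ ⋯ ⊆ I_(3n)` cannot grow strictly at every step, so `D^(k+1) = D^k` for some
`2 ≤ k < 3n`. From then on the powers of `D` are constant, so `D^k` is a subgroup containing `D`.
-/

open Pointwise

lemma pow_eq_pow_of_pow_succ_eq {M : Type*} [Monoid M] {a : M} {k m : ℕ}
    (h : a ^ (k + 1) = a ^ k) (hkm : k ≤ m) : a ^ m = a ^ k := by
  obtain ⟨d, rfl⟩ := Nat.exists_eq_add_of_le hkm
  induction d with
  | zero => rfl
  | succ d ih => rw [← add_assoc, pow_succ, ih (by omega), ← pow_succ, h]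

lemma Nat.exists_apply_succ_le_apply {f : ℕ → ℕ} {n : ℕ} (h0 : 0 < f 0) (hn : f n ≤ n) :
    ∃ j < n, f (j + 1) ≤ f j := by
  by_contra! hlt
  have : ∀ j ≤ n, j < f j := by
    intro j hj
    induction j with
    | zero => exact h0
    | succ j ih => exact lt_of_le_of_lt (ih (by omega)) (hlt j (by omega))
  exact (this n le_rfl).not_ge hn

namespace Set

variable {G : Type*} [Group G] {D : Set G}

lemma pow_eq_subgroupClosure_of_pow_succ_eq {k : ℕ} (h1 : (1 : G) ∈ D) (hsymm : D⁻¹ = D)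
    (hk : k ≠ 0) (h : D ^ (k + 1) = D ^ k) : D ^ k = (Subgroup.closure D : Set G) := by
  let H : Subgroup G :=
    { carrier := D ^ k
      one_mem' := one_mem_pow h1
      mul_mem' := fun {a b} ha hb => by
        rw [← pow_eq_pow_of_pow_succ_eq h (Nat.le_add_right k k), pow_add]
        exact mul_mem_mul ha hb
      inv_mem' := fun {a} ha => by
        rw [← hsymm, inv_pow]
        exact inv_mem_inv.mpr ha }
  exact (Subgroup.pow_subset Subgroup.subset_closure).antisymm
    (SetLike.coe_subset_coe.mpr <| Subgroup.closure_le H |>.mpr (subset_pow h1 hk))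

lemma smul_subset_pow_add_two (hsymm : D⁻¹ = D) {a : G} {m : ℕ}
    (h : (a • D ∩ D ^ m).Nonempty) : a • D ⊆ D ^ (m + 2) := by
  obtain ⟨_, ⟨d, hd, rfl⟩, hm⟩ := h
  have ha : a ∈ D ^ (m + 1) := by
    rw [pow_succ]
    refine ⟨a • d, hm, d⁻¹, ?_, by simp [smul_eq_mul]⟩
    rw [← hsymm]
    exact inv_mem_inv.mpr hd
  rw [pow_succ]
  exact smul_set_subset_mul ha

variable {ι : Type*} [Fintype ι]

open Classical in
noncomputable def indicesMeetingPow (g : ι → G) (D : Set G) (k : ℕ) : Finset ι :=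
  {i | (g i • D ∩ D ^ k).Nonempty}

lemma mem_indicesMeetingPow {g : ι → G} {k : ℕ} {i : ι} :
    i ∈ indicesMeetingPow g D k ↔ (g i • D ∩ D ^ k).Nonempty := by
  simp [indicesMeetingPow]

lemma indicesMeetingPow_mono (g : ι → G) (h1 : (1 : G) ∈ D) :
    Monotone (indicesMeetingPow g D) := fun _ _ hab _ hi =>
  mem_indicesMeetingPow.mpr <|
    (mem_indicesMeetingPow.mp hi).mono (inter_subset_inter_right _ (pow_subset_pow_right h1 hab))

lemma indicesMeetingPow_zero_nonempty {g : ι → G} (hcov : ⋃ i, g i • D = univ) :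
    (indicesMeetingPow g D 0).Nonempty := by
  obtain ⟨i, hi⟩ := mem_iUnion.mp (hcov ▸ mem_univ (1 : G))
  exact ⟨i, mem_indicesMeetingPow.mpr ⟨1, hi, by simp⟩⟩

lemma pow_add_three_subset_of_indicesMeetingPow_subset {g : ι → G} (hsymm : D⁻¹ = D)
    (hcov : ⋃ i, g i • D = univ) {m : ℕ}
    (h : indicesMeetingPow g D (m + 3) ⊆ indicesMeetingPow g D m) :
    D ^ (m + 3) ⊆ D ^ (m + 2) := by
  intro x hx
  obtain ⟨i, hi⟩ := mem_iUnion.mp (hcov ▸ mem_univ x)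
  have hmeet : i ∈ indicesMeetingPow g D m := h (mem_indicesMeetingPow.mpr ⟨x, hi, hx⟩)
  exact smul_subset_pow_add_two hsymm (mem_indicesMeetingPow.mp hmeet) hi

end Set

/-- If D ⊆ G contains 1, is symmetric, and G is covered by n left translates of D,
then D^(3n) equals the subgroup generated by D. -/
theorem stmt_1 {G : Type*} [Group G] (D : Set G) (n : ℕ)
    (h1 : (1 : G) ∈ D) (hsymm : D⁻¹ = D)
    (hcov : ∃ g : Fin n → G, ⋃ i, g i • D = Set.univ) :
    D ^ (3 * n) = (Subgroup.closure D : Set G) := by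
  obtain ⟨g, hg⟩ := hcov
  set I := Set.indicesMeetingPow g D
  obtain ⟨j, hjn, hj⟩ := Nat.exists_apply_succ_le_apply (f := fun j => (I (3 * j)).card)
    (Finset.card_pos.mpr (Set.indicesMeetingPow_zero_nonempty hg))
    ((Finset.card_le_univ _).trans_eq (Fintype.card_fin n))
  have hI : I (3 * j + 3) ⊆ I (3 * j) :=
    (Finset.eq_of_subset_of_card_le (Set.indicesMeetingPow_mono g h1 (by omega)) hj).ge
  have hstable : D ^ (3 * j + 2 + 1) = D ^ (3 * j + 2) :=
    (Set.pow_add_three_subset_of_indicesMeetingPow_subset hsymm hg hI).antisymm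
      (Set.pow_subset_pow_right h1 (by omega))
  rw [pow_eq_pow_of_pow_succ_eq hstable (by omega),
    Set.pow_eq_subgroupClosure_of_pow_succ_eq h1 hsymm (by omega) hstable]
end

section
/- If D is a generic symmetric subset of a group G containing the identity (i.e., finitely many left translates of D cover G), then the subgroup generated by D equals D^{+m} for some finite m, i.e., D generates its subgroup in finitely many steps. -/
/-!
Since `D` is symmetric and contains `1`, `⟨D⟩` is the increasing union of the powers `D ^ n`.
Any `x ∈ ⟨D⟩` can be written `x = g * d` with `d ∈ D` and `g` one of the finitely many translating
elements; then `g = x * d⁻¹ ∈ ⟨D⟩`. The finitely many such `g` all lie in a single power `D ^ N`,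
so `⟨D⟩ ⊆ D ^ (N + 1)`.
-/

open Pointwise Subgroup

section

variable {G : Type*} [Group G] {S : Set G}

theorem Subgroup.coe_closure_eq_iUnion_pow (hS : S⁻¹ = S) :
    (closure S : Set G) = ⋃ n : ℕ, S ^ n := by
  refine (Set.iUnion_subset fun n => pow_subset subset_closure).antisymm' fun x hx => ?_
  rw [Set.mem_iUnion]
  induction hx using closure_induction with
  | mem y hy => exact ⟨1, by rwa [pow_one]⟩
  | one => exact ⟨0, by rw [pow_zero]; rfl⟩
  | mul y z _ _ hy hz =>
    obtain ⟨a, ha⟩ := hy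
    obtain ⟨b, hb⟩ := hz
    exact ⟨a + b, pow_add S a b ▸ Set.mul_mem_mul ha hb⟩
  | inv y _ hy =>
    obtain ⟨a, ha⟩ := hy
    refine ⟨a, ?_⟩
    rw [← hS, inv_pow, Set.inv_mem_inv]
    exact ha

theorem Set.Finite.exists_subset_pow_of_subset_closure {t : Set G} (ht : t.Finite)
    (h1 : (1 : G) ∈ S) (hS : S⁻¹ = S) (htS : t ⊆ closure S) : ∃ n : ℕ, t ⊆ S ^ n := by
  rw [coe_closure_eq_iUnion_pow hS, ← ht.coe_toFinset] at htS
  simpa using (Set.pow_right_monotone h1).directed_le.exists_mem_subset_of_finset_subset_biUnion htS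

theorem Subgroup.coe_subset_inter_mul_of_iUnion_smul_eq_univ {H : Subgroup G} {s : Set G}
    (hSH : S ⊆ H) (hs : ⋃ g ∈ s, g • S = Set.univ) : (H : Set G) ⊆ (s ∩ H) * S := by
  intro x hx
  have hx_cover : x ∈ ⋃ g ∈ s, g • S := hs ▸ Set.mem_univ x
  obtain ⟨g, hg, d, hd, rfl⟩ := Set.mem_iUnion₂.mp hx_cover
  have hgH : g ∈ H := by simpa using H.mul_mem hx (H.inv_mem (hSH hd))
  exact Set.mul_mem_mul ⟨hg, hgH⟩ hd

end

/-- If D ⊆ G is symmetric, contains 1, and is generic (finitely many left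
translates cover G), then D generates its subgroup in finitely many steps. -/
theorem stmt_2 {G : Type*} [Group G] (D : Set G)
    (h1 : (1 : G) ∈ D) (hsymm : D⁻¹ = D)
    (hgen : ∃ s : Finset G, ⋃ g ∈ s, g • D = Set.univ) :
    ∃ m : ℕ, D ^ m = (Subgroup.closure D : Set G) := by
  obtain ⟨s, hs⟩ := hgen
  have hfin : ((s : Set G) ∩ closure D).Finite := s.finite_toSet.inter_of_left _
  obtain ⟨N, hN⟩ := hfin.exists_subset_pow_of_subset_closure h1 hsymm Set.inter_subset_right
  refine ⟨N + 1, (pow_subset subset_closure).antisymm ?_⟩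
  calc (closure D : Set G) ⊆ ((s : Set G) ∩ closure D) * D :=
        coe_subset_inter_mul_of_iUnion_smul_eq_univ subset_closure hs
    _ ⊆ D ^ N * D := Set.mul_subset_mul_right hN
    _ = D ^ (N + 1) := (pow_succ D N).symm
end

section
/- Let R be an arbitrary ring and H a finite index subgroup of the additive group (R,+). Then the set H + R·H (where R·H = {rh : r ∈ R, h ∈ H}) contains a two-sided ideal of R of finite additive index. -/
/-!
Let `K = H + R * h` for a suitable `h ∈ H`; this subgroup lies in `H + R·H`. The elements `x ∈ K`
with `R * x ⊆ K` form a left ideal `L`, and the elements `x ∈ L` with `x * R ⊆ L` form a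
two-sided ideal inside `L`. The latter has finite index as soon as `L` has, because for a left
ideal the condition `x * r ∈ L` only depends on `r` modulo `L`. Finally some `h ∈ H` makes `L` of
finite index by B. H. Neumann's lemma: the subgroups `{x ∈ H | R * x ⊆ H + R * h}` for `h ∈ H`
cover `H` and are finitely many, so one of them has finite index.
-/

open Pointwise

namespace AddSubgroup

section Group

variable {G : Type*} [AddGroup G]

theorem exists_finiteIndex_of_iUnion_eq_univ {ι : Type*} [Finite ι] {K : ι → AddSubgroup G}
    (hcover : ⋃ i, (K i : Set G) = Set.univ) : ∃ i, (K i).FiniteIndex := by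
  have := Fintype.ofFinite ι
  obtain ⟨i, -, hi⟩ := exists_finiteIndex_of_leftCoset_cover (g := fun _ ↦ (0 : G))
    (s := Finset.univ) (H := K) (by simpa using hcover)
  exact ⟨i, hi⟩

theorem finiteIndex_comap {G' : Type*} [AddGroup G'] (f : G →+ G') (K : AddSubgroup G')
    [K.FiniteIndex] : (K.comap f).FiniteIndex :=
  have := isFiniteRelIndex_of_finiteIndex (H := K) (K := f.range)
  ⟨by rw [index_comap]; exact relIndex_ne_zero⟩

theorem finiteIndex_of_finiteIndex_addSubgroupOf {K H : AddSubgroup G} [H.FiniteIndex]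
    (hK : (K.addSubgroupOf H).FiniteIndex) : K.FiniteIndex := by
  have : (K ⊓ H).FiniteIndex := ⟨by
    rw [← relIndex_mul_index inf_le_right, inf_relIndex_right]
    exact mul_ne_zero hK.index_ne_zero FiniteIndex.index_ne_zero⟩
  exact finiteIndex_of_le (H := K ⊓ H) inf_le_left

theorem finite_Ici_of_finiteIndex (H : AddSubgroup G) [H.Normal] [H.FiniteIndex] :
    (Set.Ici H).Finite :=
  Set.finite_coe_iff.mp (Finite.of_equiv _ (QuotientAddGroup.comapMk'OrderIso H).toEquiv)

end Group

variable {R : Type*} [NonUnitalRing R]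

def leftIdealCore (K : AddSubgroup R) : AddSubgroup R :=
  K ⊓ ⨅ r : R, K.comap (AddMonoidHom.mulLeft r)

def rightIdealCore (K : AddSubgroup R) : AddSubgroup R :=
  K ⊓ ⨅ r : R, K.comap (AddMonoidHom.mulRight r)

variable {K : AddSubgroup R} {x : R}

theorem mem_leftIdealCore : x ∈ K.leftIdealCore ↔ x ∈ K ∧ ∀ r, r * x ∈ K := by
  simp [leftIdealCore, mem_iInf]

theorem mem_rightIdealCore : x ∈ K.rightIdealCore ↔ x ∈ K ∧ ∀ r, x * r ∈ K := by
  simp [rightIdealCore, mem_iInf]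

theorem leftIdealCore_le : K.leftIdealCore ≤ K := inf_le_left

theorem rightIdealCore_le : K.rightIdealCore ≤ K := inf_le_left

theorem mul_mem_leftIdealCore (r : R) (hx : x ∈ K.leftIdealCore) : r * x ∈ K.leftIdealCore := by
  rw [mem_leftIdealCore] at hx ⊢
  exact ⟨hx.2 r, fun s ↦ mul_assoc s r x ▸ hx.2 (s * r)⟩

theorem mem_rightIdealCore_mul (r : R) (hx : x ∈ K.rightIdealCore) :
    x * r ∈ K.rightIdealCore := by
  rw [mem_rightIdealCore] at hx ⊢
  exact ⟨hx.2 r, fun s ↦ (mul_assoc x r s).symm ▸ hx.2 (r * s)⟩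

theorem mul_mem_rightIdealCore (hK : ∀ r x, x ∈ K → r * x ∈ K) (r : R)
    (hx : x ∈ K.rightIdealCore) : r * x ∈ K.rightIdealCore := by
  rw [mem_rightIdealCore] at hx ⊢
  exact ⟨hK r x hx.1, fun s ↦ (mul_assoc r x s).symm ▸ hK r _ (hx.2 s)⟩

theorem finiteIndex_rightIdealCore [K.FiniteIndex] (hK : ∀ r x, x ∈ K → r * x ∈ K) :
    K.rightIdealCore.FiniteIndex := by
  have : (⨅ q : R ⧸ K, K.comap (AddMonoidHom.mulRight q.out)).FiniteIndex :=
    finiteIndex_iInf fun q ↦ finiteIndex_comap _ K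
  refine finiteIndex_of_le (H := K ⊓ ⨅ q : R ⧸ K, K.comap (AddMonoidHom.mulRight q.out)) ?_
  intro x hx
  simp only [mem_inf, mem_iInf, mem_comap, AddMonoidHom.coe_mulRight] at hx
  refine mem_rightIdealCore.mpr ⟨hx.1, fun r ↦ ?_⟩
  have hr : -(r : R ⧸ K).out + r ∈ K := QuotientAddGroup.eq.mp (QuotientAddGroup.out_eq' _)
  simpa [← mul_add] using add_mem (hx.2 (r : R ⧸ K)) (hK x _ hr)

theorem exists_finiteIndex_leftIdealCore_sup_range (H : AddSubgroup R) [H.FiniteIndex] :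
    ∃ h ∈ H, (H ⊔ (AddMonoidHom.mulRight h).range).leftIdealCore.FiniteIndex := by
  let J : H → AddSubgroup R := fun h ↦ H ⊔ (AddMonoidHom.mulRight (h : R)).range
  have hJ : Set.range J ⊆ Set.Ici H := Set.range_subset_iff.mpr fun _ ↦ Set.mem_Ici.mpr le_sup_left
  have : Finite (Set.range J) := ((finite_Ici_of_finiteIndex H).subset hJ).to_subtype
  have hcover : ⋃ K : Set.range J, (K.1.leftIdealCore.addSubgroupOf H : Set H) = Set.univ :=
    Set.eq_univ_of_forall fun h ↦ Set.mem_iUnion.mpr ⟨⟨J h, h, rfl⟩, mem_addSubgroupOf.mpr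
      (mem_leftIdealCore.mpr ⟨mem_sup_left h.2, fun r ↦ mem_sup_right ⟨r, rfl⟩⟩)⟩
  obtain ⟨⟨_, h, rfl⟩, hK⟩ := exists_finiteIndex_of_iUnion_eq_univ hcover
  exact ⟨h, h.2, finiteIndex_of_finiteIndex_addSubgroupOf hK⟩

end AddSubgroup

/-- For an arbitrary ring R and a finite index additive subgroup H of (R,+),
the set H + R·H contains a two-sided ideal of R of finite additive index. -/
theorem stmt_4 {R : Type*} [NonUnitalRing R] (H : AddSubgroup R) (hH : H.FiniteIndex) :
    ∃ I : AddSubgroup R,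
      (∀ r x : R, x ∈ I → r * x ∈ I) ∧
      (∀ r x : R, x ∈ I → x * r ∈ I) ∧
      I.FiniteIndex ∧
      (I : Set R) ⊆ (H : Set R) + Set.univ * (H : Set R) := by
  obtain ⟨h, hh, hL⟩ := AddSubgroup.exists_finiteIndex_leftIdealCore_sup_range H
  set L := (H ⊔ (AddMonoidHom.mulRight h).range).leftIdealCore
  have hL_left : ∀ r x, x ∈ L → r * x ∈ L := fun r _ ↦ AddSubgroup.mul_mem_leftIdealCore r
  refine ⟨L.rightIdealCore, fun r _ ↦ AddSubgroup.mul_mem_rightIdealCore hL_left r,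
    fun r _ ↦ AddSubgroup.mem_rightIdealCore_mul r,
    AddSubgroup.finiteIndex_rightIdealCore hL_left, fun x hx ↦ ?_⟩
  obtain ⟨a, ha, _, ⟨r, rfl⟩, rfl⟩ :=
    AddSubgroup.mem_sup.mp (AddSubgroup.leftIdealCore_le (AddSubgroup.rightIdealCore_le hx))
  exact Set.add_mem_add ha (Set.mul_mem_mul (Set.mem_univ r) hh)
end

section
/- Let R be an arbitrary ring and H a finite index subgroup of (R,+). Then the set H + H·R (where H·R = {hr : h ∈ H, r ∈ R}) contains a two-sided ideal of R of finite additive index. -/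
/-!
Write `X_G = {y : yR ⊆ G}`. Every `x ∈ R` is `q + c` with `q` a representative of `x + H` and
`c ∈ H`, and `c ∈ X_{H + cR}`; since there are only finitely many subgroups `H + cR ⊇ H`, `R` is
covered by finitely many cosets of the subgroups `X_{H + cR}`, so by B. H. Neumann's lemma some
`X_G`, `G = H + cR` with `c ∈ H`, has finite index. Then `P = X_G ∩ G` is a right ideal of finite
index inside `G ⊆ H + H·R`, and `{x ∈ P : Rx ⊆ P}` is a two-sided ideal of finite index in `P`.
-/

open Pointwise

namespace AddSubgroup

instance finite_subtype_le {A : Type*} [AddCommGroup A] (H : AddSubgroup A) [H.FiniteIndex] :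
    Finite {K : AddSubgroup A // H ≤ K} :=
  have : Finite (AddSubgroup (A ⧸ H)) := Finite.of_injective _ SetLike.coe_injective
  .of_equiv _ (QuotientAddGroup.comapMk'OrderIso H).toEquiv

lemma finiteIndex_comap_s5 {A B : Type*} [AddGroup A] [AddGroup B] (G : AddSubgroup B)
    [G.FiniteIndex] (f : A →+ B) : (G.comap f).FiniteIndex := by
  have := isFiniteRelIndex_of_finiteIndex (H := G) (K := f.range)
  exact ⟨by rw [index_comap]; exact relIndex_ne_zero⟩

variable {R : Type*} [NonUnitalRing R]

def rightMulCore (G : AddSubgroup R) : AddSubgroup R :=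
  ⨅ r : R, G.comap (AddMonoidHom.mulRight r)

def leftMulCore (G : AddSubgroup R) : AddSubgroup R :=
  ⨅ r : R, G.comap (AddMonoidHom.mulLeft r)

variable {G P : AddSubgroup R}

lemma mem_rightMulCore {y : R} : y ∈ G.rightMulCore ↔ ∀ r, y * r ∈ G := by
  simp [rightMulCore, mem_iInf]

lemma mem_leftMulCore {y : R} : y ∈ G.leftMulCore ↔ ∀ r, r * y ∈ G := by
  simp [leftMulCore, mem_iInf]

lemma rightMulCore_inf_mul_mem {y : R} (hy : y ∈ G.rightMulCore ⊓ G) (r : R) :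
    y * r ∈ G.rightMulCore ⊓ G := by
  have hy := mem_rightMulCore.1 hy.1
  exact ⟨mem_rightMulCore.2 fun s ↦ mul_assoc y r s ▸ hy (r * s), hy r⟩

lemma mul_mem_inf_leftMulCore_left {x : R} (hx : x ∈ P ⊓ P.leftMulCore) (r : R) :
    r * x ∈ P ⊓ P.leftMulCore :=
  ⟨mem_leftMulCore.1 hx.2 r,
    mem_leftMulCore.2 fun t ↦ mul_assoc t r x ▸ mem_leftMulCore.1 hx.2 (t * r)⟩

section RightIdeal

variable (hP : ∀ x ∈ P, ∀ r, x * r ∈ P)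
include hP

lemma mul_mem_inf_leftMulCore {x : R} (hx : x ∈ P ⊓ P.leftMulCore) (r : R) :
    x * r ∈ P ⊓ P.leftMulCore :=
  ⟨hP x hx.1 r, mem_leftMulCore.2 fun t ↦ mul_assoc t x r ▸ hP _ (mem_leftMulCore.1 hx.2 t) r⟩

-- As `P` is a right ideal, whether `t * x ∈ P` only depends on `t` modulo `P`.
lemma finiteIndex_leftMulCore [P.FiniteIndex] : P.leftMulCore.FiniteIndex := by
  have := fun q : R ⧸ P ↦ P.finiteIndex_comap_s5 (AddMonoidHom.mulLeft q.out)
  refine @finiteIndex_of_le _ _ _ _ (finiteIndex_iInf this) fun x hx ↦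
    mem_leftMulCore.2 fun t ↦ ?_
  obtain ⟨h, hh⟩ := QuotientAddGroup.mk_out_eq_add P t
  have hq : (t : R ⧸ P).out * x ∈ P := mem_iInf.1 hx (t : R ⧸ P)
  rw [hh, add_mul] at hq
  simpa using sub_mem hq (hP h h.2 x)

end RightIdeal

lemma exists_mem_finiteIndex_rightMulCore (H : AddSubgroup R) [H.FiniteIndex] :
    ∃ c ∈ H, (H ⊔ (AddMonoidHom.mulLeft c).range).rightMulCore.FiniteIndex := by
  classical
  let ι := {K : AddSubgroup R // H ≤ K} × (R ⧸ H)
  have := Fintype.ofFinite ι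
  let s := Finset.univ.filter fun i : ι ↦ ∃ c ∈ H, i.1.1 = H ⊔ (AddMonoidHom.mulLeft c).range
  have hcover : ⋃ i ∈ s, (i.2.out : R) +ᵥ (i.1.1.rightMulCore : Set R) = Set.univ := by
    refine Set.eq_univ_of_forall fun x ↦ Set.mem_iUnion₂.2 ?_
    let q : R ⧸ H := ↑x
    have hc : -q.out + x ∈ H := QuotientAddGroup.eq.1 (QuotientAddGroup.out_eq' q)
    refine ⟨(⟨_, le_sup_left⟩, q), Finset.mem_filter.2 ⟨Finset.mem_univ _, _, hc, rfl⟩, ?_⟩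
    exact Set.mem_vadd_set_iff_neg_vadd_mem.2
      (mem_rightMulCore.2 fun r ↦ mem_sup_right ⟨r, rfl⟩)
  obtain ⟨i, hi, hfin⟩ := exists_finiteIndex_of_leftCoset_cover hcover
  obtain ⟨c, hc, hK⟩ := (Finset.mem_filter.1 hi).2
  exact ⟨c, hc, hK ▸ hfin⟩

lemma coe_sup_mulLeft_range_subset {H : AddSubgroup R} {c : R} (hc : c ∈ H) :
    ((H ⊔ (AddMonoidHom.mulLeft c).range : AddSubgroup R) : Set R) ⊆
      (H : Set R) + (H : Set R) * Set.univ := by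
  intro x hx
  obtain ⟨y, hy, _, ⟨r, rfl⟩, rfl⟩ := mem_sup.1 hx
  exact Set.add_mem_add hy (Set.mul_mem_mul hc (Set.mem_univ r))

end AddSubgroup

open AddSubgroup in
/-- For an arbitrary ring R and a finite index additive subgroup H of (R,+),
the set H + H·R contains a two-sided ideal of R of finite additive index. -/
theorem stmt_5 {R : Type*} [NonUnitalRing R] (H : AddSubgroup R) (hH : H.FiniteIndex) :
    ∃ I : AddSubgroup R,
      (∀ r x : R, x ∈ I → r * x ∈ I) ∧
      (∀ r x : R, x ∈ I → x * r ∈ I) ∧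
      I.FiniteIndex ∧
      (I : Set R) ⊆ (H : Set R) + (H : Set R) * Set.univ := by
  obtain ⟨c, hc, hcore⟩ := H.exists_mem_finiteIndex_rightMulCore
  set G := H ⊔ (AddMonoidHom.mulLeft c).range
  have : G.FiniteIndex := finiteIndex_of_le le_sup_left
  set P := G.rightMulCore ⊓ G
  have hP : ∀ x ∈ P, ∀ r, x * r ∈ P := fun x hx ↦ rightMulCore_inf_mul_mem hx
  have := finiteIndex_leftMulCore hP
  refine ⟨P ⊓ P.leftMulCore, fun r x hx ↦ mul_mem_inf_leftMulCore_left hx r,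
    fun r x hx ↦ mul_mem_inf_leftMulCore hP hx r, inferInstance, ?_⟩
  exact fun x hx ↦ coe_sup_mulLeft_range_subset hc hx.1.2
end

section
/- A ring R is called left s-unital if r ∈ Rr for every r ∈ R. If R is left s-unital and D ⊆ R is n-thick (i.e., D is symmetric and for any elements g_0,...,g_{n-1} of (R,+) there exist i < j < n with g_j − g_i ∈ D), then n!·R ⊆ R·D, i.e., for every r ∈ R there exist s ∈ R and d ∈ D with n!·r = s·d. -/
/-! Apply thickness to the arithmetic progression `0, r, 2r, …, (n-1)r`: it yields some
`k • r ∈ D` with `0 < k < n`. Then `k ∣ n!`, and a left s-unit `s` of `k • r` gives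
`n! • r = (n! / k) • (s * (k • r))`. -/

theorem exists_pos_lt_nsmul_mem_of_thick {G : Type*} [AddGroup G] {n : ℕ} {D : Set G}
    (hthick : ∀ g : Fin n → G, ∃ i j : Fin n, i < j ∧ g j - g i ∈ D) (x : G) :
    ∃ k, 0 < k ∧ k < n ∧ k • x ∈ D := by
  obtain ⟨i, j, hij, hD⟩ := hthick fun i => (i : ℕ) • x
  refine ⟨j - i, Nat.sub_pos_of_lt hij, by omega, ?_⟩
  rwa [sub_nsmul x hij.le, ← sub_eq_add_neg]

theorem stmt_6_general {R : Type*} [NonUnitalRing R] (n : ℕ) (D : Set R)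
    (hthick : ∀ g : Fin n → R, ∃ i j : Fin n, i < j ∧ g j - g i ∈ D)
    (hsu : ∀ r : R, ∃ s : R, r = s * r) :
    ∀ r : R, ∃ s : R, ∃ d ∈ D, n.factorial • r = s * d := by
  intro r
  obtain ⟨k, hk_pos, hk_lt, hkD⟩ := exists_pos_lt_nsmul_mem_of_thick hthick r
  obtain ⟨m, hm⟩ := Nat.dvd_factorial hk_pos hk_lt.le
  obtain ⟨s, hs⟩ := hsu (k • r)
  exact ⟨m • s, k • r, hkD, by rw [hm, mul_nsmul, smul_mul_assoc, ← hs]⟩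

/-- If R is left s-unital (∀ r, r ∈ Rr) and D ⊆ R is symmetric and n-thick with
respect to (R,+), then n!·R ⊆ R·D. -/
theorem stmt_6 {R : Type*} [NonUnitalRing R] (n : ℕ) (D : Set R)
    (hsymm : -D = D)
    (hthick : ∀ g : Fin n → R, ∃ i j : Fin n, i < j ∧ g j - g i ∈ D)
    (hsu : ∀ r : R, ∃ s : R, r = s * r) :
    ∀ r : R, ∃ s : R, ∃ d ∈ D, n.factorial • r = s * d :=
  stmt_6_general n D hthick hsu
end

section
/- In Z[X], a polynomial P = Σ a_j X^j belongs to the subgroup H = 2·Z[X] + ⟨X^n − X^m : n,m both prime or both non-prime⟩ if and only if both Σ_{j prime} a_j and Σ_{j non-prime} a_j are even. -/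
/-!
Both coefficient sums are additive in `P`, so the polynomials whose two sums are even form a
subgroup; it contains `2 * q` and every `X ^ n - X ^ m` with `n`, `m` in the same class, hence
contains `H`. Conversely, modulo same-class differences `P` reduces to `s₁ • X ^ 2 + s₀ • X`,
where `s₁` and `s₀` are its sums at prime and at non-prime exponents; when both are even this
lies in `2 • ℤ[X] ⊆ H`.
-/

open Polynomial

namespace Polynomial

variable (p : ℕ → Prop)

def evenOrSameClassDiff : Set ℤ[X] :=
  {P | ∃ q : ℤ[X], P = 2 * q} ∪ {P | ∃ n m : ℕ, (p n ↔ p m) ∧ P = X ^ n - X ^ m}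

variable {p}

theorem evenOrSameClassDiff_not : evenOrSameClassDiff (fun n => ¬ p n) = evenOrSameClassDiff p := by
  simp only [evenOrSameClassDiff, not_iff_not]

theorem zsmul_mem_closure_evenOrSameClassDiff {s : ℤ} (hs : Even s) (Q : ℤ[X]) :
    s • Q ∈ AddSubgroup.closure (evenOrSameClassDiff p) := by
  obtain ⟨t, rfl⟩ := hs
  exact AddSubgroup.subset_closure (Or.inl ⟨t • Q, by rw [two_mul, add_smul]⟩)

theorem X_pow_sub_X_pow_mem_closure_evenOrSameClassDiff {n m : ℕ} (hnm : p n ↔ p m) :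
    (X ^ n - X ^ m : ℤ[X]) ∈ AddSubgroup.closure (evenOrSameClassDiff p) :=
  AddSubgroup.subset_closure (Or.inr ⟨n, m, hnm, rfl⟩)

variable (p) [DecidablePred p]

noncomputable def coeffSumOn : ℤ[X] →+ ℤ :=
  (lsum (R := ℤ) fun j => if p j then LinearMap.id else 0).toAddMonoidHom

variable {p}

theorem coeffSumOn_apply (P : ℤ[X]) :
    coeffSumOn p P = ∑ j ∈ P.support.filter p, P.coeff j := by
  simp only [coeffSumOn, LinearMap.toAddMonoidHom_coe, lsum_apply, Polynomial.sum,
    Finset.sum_filter]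
  refine Finset.sum_congr rfl fun j _ => ?_
  split_ifs <;> rfl

theorem coeffSumOn_monomial (n : ℕ) (c : ℤ) :
    coeffSumOn p (monomial n c) = if p n then c else 0 := by
  simp only [coeffSumOn, LinearMap.toAddMonoidHom_coe, lsum_apply]
  rw [sum_monomial_index _ _ (by simp)]
  split_ifs <;> rfl

theorem even_coeffSumOn_of_mem_closure {P : ℤ[X]}
    (hP : P ∈ AddSubgroup.closure (evenOrSameClassDiff p)) : Even (coeffSumOn p P) := by
  suffices AddSubgroup.closure (evenOrSameClassDiff p) ≤
      (AddSubgroup.zmultiples 2).comap (coeffSumOn p) by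
    exact even_iff_two_dvd.mpr (Int.mem_zmultiples_iff.mp (this hP))
  rw [AddSubgroup.closure_le]
  rintro _ (⟨q, rfl⟩ | ⟨n, m, hnm, rfl⟩) <;>
    simp only [SetLike.mem_coe, AddSubgroup.mem_comap, Int.mem_zmultiples_iff]
  · rw [two_mul, map_add]
    exact ⟨_, (two_mul _).symm⟩
  · rw [map_sub, ← monomial_one_right_eq_X_pow, ← monomial_one_right_eq_X_pow,
      coeffSumOn_monomial, coeffSumOn_monomial]
    by_cases hn : p n <;> simp [hn, hnm.not.mp, hnm.mp]

theorem sub_coeffSumOn_smul_mem_closure {a b : ℕ} (ha : p a) (hb : ¬ p b) (P : ℤ[X]) :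
    P - (coeffSumOn p P • X ^ a + coeffSumOn (fun n => ¬ p n) P • X ^ b) ∈
      AddSubgroup.closure (evenOrSameClassDiff p) := by
  induction P using Polynomial.induction_on' with
  | add P Q hP hQ =>
    convert add_mem hP hQ using 1
    simp only [map_add, add_smul]
    abel
  | monomial n c =>
    have hdiff {k : ℕ} (hk : p n ↔ p k) : c • (X ^ n - X ^ k : ℤ[X]) ∈
        AddSubgroup.closure (evenOrSameClassDiff p) :=
      zsmul_mem (X_pow_sub_X_pow_mem_closure_evenOrSameClassDiff hk) c
    rw [coeffSumOn_monomial, coeffSumOn_monomial, ← smul_X_eq_monomial]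
    by_cases hn : p n
    · simpa [hn, smul_sub] using hdiff (iff_of_true hn ha)
    · simpa [hn, smul_sub] using hdiff (iff_of_false hn hb)

theorem mem_closure_evenOrSameClassDiff_iff {a b : ℕ} (ha : p a) (hb : ¬ p b) (P : ℤ[X]) :
    P ∈ AddSubgroup.closure (evenOrSameClassDiff p) ↔
      Even (coeffSumOn p P) ∧ Even (coeffSumOn (fun n => ¬ p n) P) := by
  constructor
  · intro hP
    refine ⟨even_coeffSumOn_of_mem_closure hP, ?_⟩
    rw [← evenOrSameClassDiff_not] at hP
    exact even_coeffSumOn_of_mem_closure hP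
  · rintro ⟨h₁, h₀⟩
    have hrep := add_mem (sub_coeffSumOn_smul_mem_closure ha hb P)
      (add_mem (zsmul_mem_closure_evenOrSameClassDiff h₁ (X ^ a))
        (zsmul_mem_closure_evenOrSameClassDiff h₀ (X ^ b)))
    rwa [sub_add_cancel] at hrep

end Polynomial

/-- A polynomial P ∈ Z[X] belongs to
H = 2·Z[X] + ⟨X^n − X^m : n,m both prime or both non-prime⟩ iff the sum of its
coefficients at prime exponents and the sum at non-prime exponents are both even. -/
theorem stmt_9 (P : Polynomial ℤ) :
    P ∈ AddSubgroup.closure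
        ({p : Polynomial ℤ | ∃ q : Polynomial ℤ, p = 2 * q} ∪
         {p : Polynomial ℤ | ∃ n m : ℕ, (n.Prime ↔ m.Prime) ∧ p = X ^ n - X ^ m}) ↔
      (Even (∑ j ∈ P.support.filter (fun j => j.Prime), P.coeff j) ∧
       Even (∑ j ∈ P.support.filter (fun j => ¬ j.Prime), P.coeff j)) := by
  rw [← coeffSumOn_apply, ← coeffSumOn_apply]
  exact mem_closure_evenOrSameClassDiff_iff Nat.prime_two Nat.not_prime_one P
end

section
/- If I is an ideal of Z[X] of additive index at most m (m a positive integer), then the ideal generated by m! and X^{m!+m} − X^m is contained in I. -/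
/-!
The quotient ring `R = ℤ[X] ⧸ I` has `n ≤ m` elements, so `n = 0` in `R` and `n ∣ m!`, whence
`m! ∈ I`. Multiplicatively, the powers `1, x, …, x^m` of any `x ∈ R` cannot all be distinct, so
`x^(a + d) = x^a` for some `0 < d` with `a + d ≤ m`. Then `x^k` is `d`-periodic in `k ≥ a`, and since
`d ∣ m!` we get `x^(m! + m) = x^m`; apply this to `x = X`.
-/

open Function Polynomial

open scoped Nat

section Monoid

variable {M : Type*} [Monoid M]

theorem isPeriodicPt_mul_right_pow_iff {x : M} {a d : ℕ} :
    IsPeriodicPt (· * x) d (x ^ a) ↔ x ^ (a + d) = x ^ a := by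
  simp [IsPeriodicPt, IsFixedPt, pow_add]

theorem exists_pow_add_eq_pow_of_card_le [Finite M] {m : ℕ} (hcard : Nat.card M ≤ m) (x : M) :
    ∃ a d : ℕ, 0 < d ∧ a + d ≤ m ∧ x ^ (a + d) = x ^ a := by
  cases nonempty_fintype M
  have hlt : Fintype.card M < Fintype.card (Fin (m + 1)) := by
    rw [← Nat.card_eq_fintype_card, Fintype.card_fin]
    omega
  obtain ⟨i, j, hne, hij⟩ := Fintype.exists_ne_map_eq_of_card_lt (fun i : Fin (m + 1) => x ^ i.val) hlt
  rcases hne.lt_or_gt with h | h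
  · exact ⟨i, j - i, by omega, by omega, by rw [Nat.add_sub_cancel' h.le]; exact hij.symm⟩
  · exact ⟨j, i - j, by omega, by omega, by rw [Nat.add_sub_cancel' h.le]; exact hij⟩

theorem pow_factorial_add_eq_pow_of_card_le [Finite M] {m : ℕ} (hcard : Nat.card M ≤ m) (x : M) :
    x ^ (m ! + m) = x ^ m := by
  obtain ⟨a, d, hd, hadm, hx⟩ := exists_pow_add_eq_pow_of_card_le hcard x
  have hper : IsPeriodicPt (· * x) d (x ^ m) := by
    have := (isPeriodicPt_mul_right_pow_iff.2 hx).apply_iterate (m - a)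
    rwa [mul_right_iterate_apply, ← pow_add, Nat.add_sub_cancel' (by omega)] at this
  rw [add_comm]
  exact isPeriodicPt_mul_right_pow_iff.1 (hper.trans_dvd (Nat.dvd_factorial hd (by omega)))

end Monoid

section Ideal

variable {R : Type*} [CommRing R] {I : Ideal R} {m : ℕ}

theorem Ideal.natCast_factorial_mem_of_index_le (hfin : I.toAddSubgroup.index ≠ 0)
    (hle : I.toAddSubgroup.index ≤ m) : (m ! : R) ∈ I := by
  obtain ⟨k, hk⟩ := Nat.dvd_factorial (Nat.pos_of_ne_zero hfin) hle
  rw [← Ideal.Quotient.eq_zero_iff_mem, hk, Nat.cast_mul, map_mul, map_natCast,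
    Ideal.Quotient.index_eq_zero, zero_mul]

theorem Ideal.pow_factorial_add_sub_pow_mem_of_index_le (hfin : I.toAddSubgroup.index ≠ 0)
    (hle : I.toAddSubgroup.index ≤ m) (r : R) : r ^ (m ! + m) - r ^ m ∈ I := by
  have : Finite (R ⧸ I) := Nat.finite_of_card_ne_zero hfin
  rw [← Ideal.Quotient.eq_zero_iff_mem, map_sub, map_pow, map_pow,
    pow_factorial_add_eq_pow_of_card_le (M := R ⧸ I) hle, sub_self]

end Ideal

theorem stmt_10_general (m : ℕ) (I : Ideal (Polynomial ℤ))
    (hfin : I.toAddSubgroup.index ≠ 0) (hle : I.toAddSubgroup.index ≤ m) :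
    Ideal.span ({(m.factorial : Polynomial ℤ),
      X ^ (m.factorial + m) - X ^ m} : Set (Polynomial ℤ)) ≤ I := by
  rw [Ideal.span_le, Set.insert_subset_iff, Set.singleton_subset_iff]
  exact ⟨Ideal.natCast_factorial_mem_of_index_le hfin hle,
    Ideal.pow_factorial_add_sub_pow_mem_of_index_le hfin hle X⟩

/-- If I is an ideal of Z[X] of additive index at most m (m ≥ 1), then the ideal
generated by m! and X^{m!+m} − X^m is contained in I. -/
theorem stmt_10 (m : ℕ) (hm : 0 < m) (I : Ideal (Polynomial ℤ))
    (hfin : I.toAddSubgroup.index ≠ 0) (hle : I.toAddSubgroup.index ≤ m) :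
    Ideal.span ({(m.factorial : Polynomial ℤ),
      X ^ (m.factorial + m) - X ^ m} : Set (Polynomial ℤ)) ≤ I :=
  stmt_10_general m I hfin hle
end

section
/- Let H be the additive subgroup 2·Z[X] + ⟨X^n − X^m : n,m both prime or both not prime⟩ of Z[X]. Then H has index at most 4 in (Z[X],+), but the set Z[X]·H = {f·h : f ∈ Z[X], h ∈ H} does not contain any ideal of Z[X] of finite additive index. -/
open Polynomial Pointwise

/-!
Let `σ f` be the sum of the coefficients of `f` at prime exponents. The generators of `H` all have
`σ` and `f(1)` even, and conversely every `f` is congruent modulo the differences `X ^ n - X ^ m`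
to `σ(f) X ^ 2 + (f(1) - σ(f))`, so `H` is the kernel of `f ↦ (σ f, f(1)) mod 2` and has index
at most 4.

An ideal `I` of finite index `M` contains `M` and some `X ^ (m + s) - X ^ m` for all large `m`;
choose `m` prime with `m + s` composite. For a prime `q ∤ M`, adding a multiple of `M` yields an
Eisenstein polynomial `X ^ (m + s) + (M c - 1) X ^ m + M q c ∈ I` at `q`. If `I ⊆ Z[X]·H`, then
`M ∈ Z[X]·H` forces `M` even (evaluate at 1), and irreducibility forces the Eisenstein polynomial
to lie in `H` up to sign (`H` contains no units). But its `σ` is `M c - 1`, which is odd.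
-/
theorem Nat.exists_prime_and_not_prime_add (e : ℕ) {s : ℕ} (hs : 0 < s) :
    ∃ m, e ≤ m ∧ m.Prime ∧ ¬(m + s).Prime := by
  obtain ⟨p, hep, hp⟩ := Nat.exists_infinite_primes e
  by_contra! h
  have hprog : ∀ k, (p + k * s).Prime := by
    intro k
    induction k with
    | zero => simpa using hp
    | succ k ih =>
      rw [add_one_mul, ← add_assoc]
      exact h _ (by omega) ih
  have := hprog p
  rw [show p + p * s = p * (1 + s) by ring, Nat.prime_mul_iff] at this
  have := hp.one_lt
  omega

theorem Ideal.natCast_index_mem {R : Type*} [Ring R] (I : Ideal R) :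
    (I.toAddSubgroup.index : R) ∈ I := by
  simpa using AddSubgroup.nsmul_index_mem I.toAddSubgroup (1 : R)

theorem Ideal.exists_pow_add_sub_pow_mem {R : Type*} [CommRing R] (I : Ideal R)
    (hI : I.toAddSubgroup.index ≠ 0) (x : R) :
    ∃ e s, 0 < s ∧ ∀ m, e ≤ m → x ^ (m + s) - x ^ m ∈ I := by
  have : Finite (R ⧸ I.toAddSubgroup) := (Nat.card_ne_zero.mp hI).2
  obtain ⟨i, j, hij, hx⟩ :=
    Finite.exists_ne_map_eq_of_infinite fun n : ℕ => ((x ^ n : R) : R ⧸ I.toAddSubgroup)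
  wlog hlt : i < j generalizing i j
  · exact this j i hij.symm hx.symm (by omega)
  have hsub : x ^ j - x ^ i ∈ I := by
    simpa [sub_eq_neg_add] using QuotientAddGroup.eq.mp hx
  refine ⟨i, j - i, by omega, fun m hm => ?_⟩
  convert I.mul_mem_left (x ^ (m - i)) hsub using 1
  rw [mul_sub, ← pow_add, ← pow_add, Nat.sub_add_cancel hm]
  congr 2
  omega

theorem Polynomial.irreducible_X_pow_add_C_mul_X_pow_add_C {R : Type*} [CommRing R] [IsDomain R]
    {p a b : R} (hp : Prime p) {m n : ℕ} (hm : 0 < m) (hmn : m < n)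
    (ha : p ∣ a) (hb : p ∣ b) (hb2 : ¬p ^ 2 ∣ b) :
    Irreducible (X ^ n + C a * X ^ m + C b) := by
  have hlow : (C a * X ^ m + C b).degree < (n : WithBot ℕ) :=
    (degree_add_le _ _).trans_lt <| max_lt
      ((degree_C_mul_X_pow_le m a).trans_lt (by exact_mod_cast hmn))
      (degree_C_le.trans_lt (by exact_mod_cast hm.trans hmn))
  have hmonic : (X ^ n + C a * X ^ m + C b).Monic := by
    rw [add_assoc]; exact monic_X_pow_add hlow
  have hdeg : (X ^ n + C a * X ^ m + C b).natDegree = n := by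
    rw [add_assoc, natDegree_add_eq_left_of_degree_lt (by rwa [degree_X_pow]), natDegree_X_pow]
  have hcoeff : ∀ k, (X ^ n + C a * X ^ m + C b).coeff k =
      (if k = n then 1 else 0) + (if k = m then a else 0) + (if k = 0 then b else 0) := by
    intro k
    simp only [coeff_add, coeff_C_mul, coeff_X_pow, coeff_C, mul_ite, mul_one, mul_zero]
  have hP := (Ideal.span_singleton_prime hp.ne_zero).mpr hp
  refine IsEisensteinAt.irreducible ⟨?_, fun {k} hk => ?_, ?_⟩ hP hmonic.isPrimitive (by omega)
  · rw [hmonic.leadingCoeff, ← Ideal.eq_top_iff_one]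
    exact hP.ne_top
  · rw [hdeg] at hk
    rw [hcoeff, if_neg hk.ne, zero_add, Ideal.mem_span_singleton]
    exact dvd_add (by split_ifs <;> simp [ha]) (by split_ifs <;> simp [hb])
  · rw [hcoeff, if_neg (by omega), if_neg hm.ne, if_pos rfl, zero_add, zero_add,
      Ideal.span_singleton_pow, Ideal.mem_span_singleton]
    exact hb2

noncomputable def primeCoeffSum : ℤ[X] →ₗ[ℤ] ℤ :=
  lsum fun n => if n.Prime then LinearMap.id else 0

theorem primeCoeffSum_C_mul_X_pow (t : ℤ) (n : ℕ) :
    primeCoeffSum (C t * X ^ n) = if n.Prime then t else 0 := by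
  rw [C_mul_X_pow_eq_monomial, primeCoeffSum, lsum_apply, sum_monomial_index _ _ (by simp)]
  split_ifs <;> rfl

theorem primeCoeffSum_X_pow (n : ℕ) : primeCoeffSum (X ^ n) = if n.Prime then 1 else 0 := by
  simpa using primeCoeffSum_C_mul_X_pow 1 n

theorem primeCoeffSum_C (t : ℤ) : primeCoeffSum (C t) = 0 := by
  simpa [Nat.not_prime_zero] using primeCoeffSum_C_mul_X_pow t 0

noncomputable def parityMap : ℤ[X] →+ ZMod 2 × ZMod 2 :=
  ((Int.castAddHom (ZMod 2)).comp primeCoeffSum.toAddMonoidHom).prod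
    ((Int.castAddHom (ZMod 2)).comp (evalRingHom 1).toAddMonoidHom)

theorem parityMap_apply (f : ℤ[X]) :
    parityMap f = ((primeCoeffSum f : ZMod 2), ((f.eval 1 : ℤ) : ZMod 2)) := rfl

noncomputable def primeParitySubgroup : AddSubgroup ℤ[X] :=
  AddSubgroup.closure
    ({p : ℤ[X] | ∃ q : ℤ[X], p = 2 * q} ∪
     {p : ℤ[X] | ∃ n m : ℕ, (n.Prime ↔ m.Prime) ∧ p = X ^ n - X ^ m})

theorem X_pow_sub_X_pow_mem_primeParitySubgroup {n m : ℕ} (h : n.Prime ↔ m.Prime) :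
    X ^ n - X ^ m ∈ primeParitySubgroup :=
  AddSubgroup.subset_closure (Or.inr ⟨n, m, h, rfl⟩)

theorem two_mul_mem_primeParitySubgroup (q : ℤ[X]) : 2 * q ∈ primeParitySubgroup :=
  AddSubgroup.subset_closure (Or.inl ⟨q, rfl⟩)

theorem sub_C_mul_X_sq_sub_C_mem_primeParitySubgroup (f : ℤ[X]) :
    f - (C (primeCoeffSum f) * X ^ 2 + C (f.eval 1 - primeCoeffSum f)) ∈ primeParitySubgroup := by
  induction f using Polynomial.induction_on' with
  | add p q hp hq =>
    convert add_mem hp hq using 1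
    simp only [map_add, eval_add, map_sub]
    ring
  | monomial n t =>
    rw [← C_mul_X_pow_eq_monomial, primeCoeffSum_C_mul_X_pow]
    by_cases hn : n.Prime
    · have hgen := X_pow_sub_X_pow_mem_primeParitySubgroup (iff_of_true hn Nat.prime_two)
      convert zsmul_mem hgen t using 1
      simp [hn, zsmul_eq_mul, mul_sub]
    · have hgen := X_pow_sub_X_pow_mem_primeParitySubgroup (iff_of_false hn Nat.not_prime_zero)
      convert zsmul_mem hgen t using 1
      simp [hn, zsmul_eq_mul, mul_sub]

theorem primeParitySubgroup_eq_ker : primeParitySubgroup = parityMap.ker := by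
  refine le_antisymm (AddSubgroup.closure_le _ |>.mpr ?_) fun f hf => ?_
  · rintro _ (⟨q, rfl⟩ | ⟨n, m, hnm, rfl⟩)
    · rw [SetLike.mem_coe, AddMonoidHom.mem_ker, two_mul, map_add]
      exact CharTwo.add_self_eq_zero _
    · simp [parityMap_apply, primeCoeffSum_X_pow, hnm]
  · rw [AddMonoidHom.mem_ker, parityMap_apply, Prod.mk_eq_zero,
      ZMod.intCast_eq_zero_iff_even, ZMod.intCast_eq_zero_iff_even] at hf
    obtain ⟨⟨a, ha⟩, ⟨b, hb⟩⟩ := hf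
    have hrest : C (primeCoeffSum f) * X ^ 2 + C (f.eval 1 - primeCoeffSum f) =
        2 * (C a * X ^ 2 + C (b - a)) := by
      rw [ha, hb]; simp only [map_add, map_sub]; ring
    have := add_mem (sub_C_mul_X_sq_sub_C_mem_primeParitySubgroup f)
      (two_mul_mem_primeParitySubgroup (C a * X ^ 2 + C (b - a)))
    rwa [hrest, sub_add_cancel] at this

theorem index_primeParitySubgroup_ne_zero : primeParitySubgroup.index ≠ 0 := by
  rw [primeParitySubgroup_eq_ker, AddSubgroup.index_ker]
  exact Nat.card_pos.ne'

theorem index_primeParitySubgroup_le : primeParitySubgroup.index ≤ 4 := by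
  rw [primeParitySubgroup_eq_ker, AddSubgroup.index_ker]
  exact (Finite.card_subtype_le _).trans_eq (by simp)

theorem mem_primeParitySubgroup_iff {f : ℤ[X]} :
    f ∈ primeParitySubgroup ↔ Even (primeCoeffSum f) ∧ Even (f.eval 1) := by
  rw [primeParitySubgroup_eq_ker, AddMonoidHom.mem_ker, parityMap_apply, Prod.mk_eq_zero,
    ZMod.intCast_eq_zero_iff_even, ZMod.intCast_eq_zero_iff_even]

theorem not_isUnit_of_mem_primeParitySubgroup {h : ℤ[X]} (hh : h ∈ primeParitySubgroup) :
    ¬IsUnit h := by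
  intro hu
  obtain ⟨r, hr, rfl⟩ := Polynomial.isUnit_iff.mp hu
  rcases Int.isUnit_iff.mp hr with rfl | rfl <;> simp [mem_primeParitySubgroup_iff] at hh

theorem mem_primeParitySubgroup_of_irreducible {a : ℤ[X]} (ha : Irreducible a)
    (hmem : a ∈ Set.univ * (primeParitySubgroup : Set ℤ[X])) : a ∈ primeParitySubgroup := by
  obtain ⟨f, -, h, hh, rfl⟩ := hmem
  rcases ha.isUnit_or_isUnit rfl with hf | hu
  · obtain ⟨r, hr, rfl⟩ := Polynomial.isUnit_iff.mp hf
    rcases Int.isUnit_iff.mp hr with rfl | rfl <;> simpa using hh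
  · exact absurd hu (not_isUnit_of_mem_primeParitySubgroup hh)

theorem even_eval_one_of_mem_univ_mul {p : ℤ[X]}
    (hp : p ∈ Set.univ * (primeParitySubgroup : Set ℤ[X])) : Even (p.eval 1) := by
  obtain ⟨f, -, h, hh, rfl⟩ := hp
  rw [eval_mul]
  exact (mem_primeParitySubgroup_iff.mp hh).2.mul_left _

theorem X_pow_add_C_mul_X_pow_add_C_notMem_primeParitySubgroup {m n : ℕ} (hm : m.Prime)
    (hn : ¬n.Prime) {a : ℤ} (ha : Odd a) (b : ℤ) :
    X ^ n + C a * X ^ m + C b ∉ primeParitySubgroup := by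
  rw [mem_primeParitySubgroup_iff, map_add, map_add, primeCoeffSum_X_pow,
    primeCoeffSum_C_mul_X_pow, primeCoeffSum_C, if_neg hn, if_pos hm, zero_add, add_zero]
  exact fun h => Int.not_even_iff_odd.mpr ha h.1

theorem Ideal.exists_irreducible_mem_of_index_ne_zero (I : Ideal ℤ[X])
    (hI : I.toAddSubgroup.index ≠ 0) :
    ∃ (m n : ℕ) (c d : ℤ), m.Prime ∧ ¬n.Prime ∧
      X ^ n + C (I.toAddSubgroup.index * c - 1) * X ^ m + C (I.toAddSubgroup.index * d) ∈ I ∧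
      Irreducible
        (X ^ n + C (I.toAddSubgroup.index * c - 1) * X ^ m + C (I.toAddSubgroup.index * d)) := by
  set M := I.toAddSubgroup.index
  obtain ⟨e, s, hs, hpow⟩ := I.exists_pow_add_sub_pow_mem hI X
  obtain ⟨m, hem, hm, hn⟩ := Nat.exists_prime_and_not_prime_add e hs
  obtain ⟨q, hqM, hq⟩ := Nat.exists_infinite_primes (M + 1)
  have hMq : Nat.Coprime M q := Nat.coprime_comm.mp <| hq.coprime_iff_not_dvd.mpr fun h => by
    have := Nat.le_of_dvd (Nat.pos_of_ne_zero hI) h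
    omega
  obtain ⟨u, v, huv⟩ := Nat.isCoprime_iff_coprime.mpr hMq
  refine ⟨m, m + s, u, q * u, hm, hn, ?_, ?_⟩
  · convert add_mem (hpow m hem) (I.mul_mem_right (C u * X ^ m + C (q * u)) I.natCast_index_mem)
      using 1
    simp only [map_sub, map_mul, map_one, map_natCast]
    ring
  have hq' : Prime (q : ℤ) := Nat.prime_iff_prime_int.mp hq
  refine irreducible_X_pow_add_C_mul_X_pow_add_C hq' hm.pos (by omega) ⟨-v, by linarith⟩
    ⟨M * u, by ring⟩ fun h => hq'.not_dvd_one ?_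
  rw [show (M : ℤ) * (q * u) = q * (u * M) by ring, pow_two] at h
  rw [← huv]
  exact dvd_add ((mul_dvd_mul_iff_left hq'.ne_zero).mp h) (dvd_mul_left _ _)

theorem Ideal.not_subset_univ_mul_primeParitySubgroup (I : Ideal ℤ[X])
    (hI : I.toAddSubgroup.index ≠ 0) :
    ¬(I : Set ℤ[X]) ⊆ Set.univ * (primeParitySubgroup : Set ℤ[X]) := by
  intro hsub
  obtain ⟨m, n, c, d, hm, hn, hmem, hirr⟩ := I.exists_irreducible_mem_of_index_ne_zero hI
  have hM : Even (I.toAddSubgroup.index : ℤ) := by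
    simpa using even_eval_one_of_mem_univ_mul (hsub I.natCast_index_mem)
  exact X_pow_add_C_mul_X_pow_add_C_notMem_primeParitySubgroup hm hn
    ((hM.mul_right c).sub_odd odd_one) _ (mem_primeParitySubgroup_of_irreducible hirr (hsub hmem))

/-- The additive subgroup H = 2·Z[X] + ⟨X^n − X^m : n,m both prime or both not prime⟩
has finite index at most 4 in (Z[X],+), but Z[X]·H contains no ideal of Z[X] of
finite additive index. -/
theorem stmt_12 :
    let H : AddSubgroup (Polynomial ℤ) :=
      AddSubgroup.closure
        ({p : Polynomial ℤ | ∃ q : Polynomial ℤ, p = 2 * q} ∪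
         {p : Polynomial ℤ | ∃ n m : ℕ, (n.Prime ↔ m.Prime) ∧ p = X ^ n - X ^ m})
    H.index ≠ 0 ∧ H.index ≤ 4 ∧
    ¬ ∃ I : Ideal (Polynomial ℤ), I.toAddSubgroup.index ≠ 0 ∧
        (I : Set (Polynomial ℤ)) ⊆ Set.univ * (H : Set (Polynomial ℤ)) :=
  ⟨index_primeParitySubgroup_ne_zero, index_primeParitySubgroup_le,
    fun ⟨I, hI, hsub⟩ => I.not_subset_univ_mul_primeParitySubgroup hI hsub⟩
end

section
/- Let R be a commutative unital ring generated as a ring by 1 together with elements a_1,...,a_n. Suppose k is a nonzero integer and for each i, k_i < l_i are natural numbers. Then the ideal I generated by k·1 and the elements a_i^{l_i} − a_i^{k_i} (i = 1,...,n) has finite additive index in R. -/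
/-!
Modulo the ideal, each generator satisfies the monic equation `X ^ lᵢ - X ^ kᵢ = 0`, so the
quotient is a ring generated by finitely many elements integral over `ℤ`, hence a finitely
generated abelian group. It is killed by the nonzero integer `k`, so it is finite.
-/

open Polynomial

theorem isIntegral_of_pow_sub_pow_eq_zero {R A : Type*} [CommRing R] [Ring A] [Algebra R A]
    {x : A} {m l : ℕ} (hml : m < l) (hx : x ^ l - x ^ m = 0) : IsIntegral R x :=
  ⟨X ^ l - X ^ m, monic_X_pow_sub ((degree_X_pow_le m).trans_lt (by exact_mod_cast hml)),
    by simpa using hx⟩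

theorem Subring.closure_image_eq_top {R S : Type*} [Ring R] [Ring S] {f : R →+* S}
    (hf : Function.Surjective f) {s : Set R} (hs : Subring.closure s = ⊤) :
    Subring.closure (f '' s) = ⊤ := by
  rw [← RingHom.map_closure, hs, ← RingHom.range_eq_map, RingHom.range_eq_top_of_surjective f hf]

theorem Module.Finite.int_of_closure_eq_top {S : Type*} [CommRing S] {s : Set S}
    (hs : s.Finite) (hint : ∀ x ∈ s, IsIntegral ℤ x) (hgen : Subring.closure s = ⊤) :
    Module.Finite ℤ S := by
  have htop : Algebra.adjoin ℤ s = ⊤ := by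
    rw [Algebra.adjoin_int, hgen]
    rfl
  have hfg := fg_adjoin_of_finite hs hint
  rw [htop, Algebra.top_toSubmodule] at hfg
  exact ⟨hfg⟩

theorem finite_of_intCast_eq_zero {S : Type*} [Ring S] [Module.Finite ℤ S] {k : ℤ}
    (hk : k ≠ 0) (hkS : (k : S) = 0) : Finite S :=
  Module.finite_of_fg_torsion S fun x =>
    ⟨⟨k, mem_nonZeroDivisors_of_ne_zero hk⟩, by simp [zsmul_eq_mul, hkS]⟩

/-- If a commutative unital ring R is generated as a ring by 1 and a₁,…,aₙ,
k is a nonzero integer, and kᵢ < lᵢ, then the ideal generated by k·1 and the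
elements aᵢ^{lᵢ} − aᵢ^{kᵢ} has finite additive index in R. -/
theorem stmt_13 {R : Type*} [CommRing R] (n : ℕ) (a : Fin n → R)
    (hgen : Subring.closure (insert 1 (Set.range a)) = ⊤)
    (k : ℤ) (hk : k ≠ 0) (ki li : Fin n → ℕ) (hkl : ∀ i, ki i < li i) :
    Finite (R ⧸ Ideal.span
      ({(k : R)} ∪ Set.range (fun i => a i ^ (li i) - a i ^ (ki i)))) := by
  set I := Ideal.span ({(k : R)} ∪ Set.range (fun i => a i ^ (li i) - a i ^ (ki i)))
  let π := Ideal.Quotient.mk I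
  have hgenI : Subring.closure (π '' Set.range a) = ⊤ := by
    rw [Subring.closure_insert_one] at hgen
    exact Subring.closure_image_eq_top Ideal.Quotient.mk_surjective hgen
  have hint : ∀ x ∈ π '' Set.range a, IsIntegral ℤ x := by
    rintro _ ⟨_, ⟨i, rfl⟩, rfl⟩
    refine isIntegral_of_pow_sub_pow_eq_zero (hkl i) ?_
    rw [← map_pow, ← map_pow, ← map_sub, Ideal.Quotient.eq_zero_iff_mem]
    exact Ideal.subset_span (Or.inr ⟨i, rfl⟩)
  have := Module.Finite.int_of_closure_eq_top ((Set.finite_range a).image π) hint hgenI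
  refine finite_of_intCast_eq_zero hk ?_
  rw [← map_intCast π, Ideal.Quotient.eq_zero_iff_mem]
  exact Ideal.subset_span (Or.inl rfl)
end

section
/- Let G = (Z/qZ)^{⊕N} with N ≤ ω and q a natural number (where Z_0 = Z), and for i < N let G_i be the subgroup of elements supported in {0,...,i}. For every finite index subgroup H of G there exist elements g_i ∈ G_i (i < N) such that: g_i(i) fails to be invertible in Z/qZ for fewer than [G:H] many indices i; H ∩ G_i = Σ_{j ≤ i} (Z/qZ)·g_j for all i < N; and H = Σ_{i<N} (Z/qZ)·g_i. Moreover if q = 0 then g_i(i) ≠ 0 for all i. -/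
/-!
For each `i`, the `i`-th coordinates of the elements of `H ∩ G_i` form a subgroup of `ZMod q`,
which is cyclic; take `g_i ∈ H ∩ G_i` whose `i`-th coordinate generates it. Subtracting a
multiple of `g_i` from an element of `H ∩ G_i` moves it into `H ∩ G_{i-1}`, so by induction
the `g_j` with `j ≤ i` generate `H ∩ G_i`. If `g_i(i)` is not a unit, then `1` is not such a
coordinate, so `e_i ∉ H + ⟨e_j : j ∈ s⟩` whenever `s` consists of indices below `i`. Adjoining
these `e_i` to `H` in increasing order of `i` thus halves the index at every step, so there
are fewer than `[G:H]` of them. For `q = 0`, the element `[G:H] • e_i ∈ H ∩ G_i` has nonzero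
`i`-th coordinate.
-/

open AddSubgroup Finsupp

theorem AddSubgroup.two_mul_index_le_of_lt {G : Type*} [AddGroup G] {H K : AddSubgroup G}
    (h : H < K) [H.FiniteIndex] : 2 * K.index ≤ H.index := by
  rw [← relIndex_mul_index h.le]
  have h0 : H.relIndex K ≠ 0 := (isFiniteRelIndex_of_finiteIndex (K := K)).relIndex_ne_zero
  have h1 : H.relIndex K ≠ 1 := mt relIndex_eq_one.mp h.not_ge
  exact Nat.mul_le_mul_right _ (by omega)

theorem isUnit_of_one_mem_zmultiples {R : Type*} [CommRing R] {a : R}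
    (h : (1 : R) ∈ zmultiples a) : IsUnit a := by
  obtain ⟨k, hk⟩ := mem_zmultiples_iff.mp h
  rw [zsmul_eq_mul] at hk
  exact IsUnit.of_mul_eq_one_right _ hk

namespace Finsupp

variable {ι M : Type*} [LinearOrder ι] [AddCommGroup M]

noncomputable def leadingCoeffs (H : AddSubgroup (ι →₀ M)) (i : ι) : AddSubgroup M :=
  (H ⊓ (supported M ℤ (Set.Iic i)).toAddSubgroup).map (applyAddHom i)

theorem mem_leadingCoeffs {H : AddSubgroup (ι →₀ M)} {i : ι} {x : M} :
    x ∈ leadingCoeffs H i ↔ ∃ f ∈ H, (∀ j, i < j → f j = 0) ∧ f i = x := by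
  simp [leadingCoeffs, mem_supported', and_assoc]

theorem eq_zero_or_exists_max_support (f : ι →₀ M) :
    f = 0 ∨ ∃ m, f m ≠ 0 ∧ ∀ j, m < j → f j = 0 := by
  rcases f.support.eq_empty_or_nonempty with h | h
  · exact .inl (support_eq_empty.mp h)
  · refine .inr ⟨f.support.max' h, mem_support_iff.mp (f.support.max'_mem h), fun j hj => ?_⟩
    exact notMem_support_iff.mp fun hmem => hj.not_ge (f.support.le_max' j hmem)

structure IsEchelonFamily (H : AddSubgroup (ι →₀ M)) (g : ι → ι →₀ M) : Prop where
  mem : ∀ i, g i ∈ H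
  apply_eq_zero_of_lt : ∀ i j, i < j → g i j = 0
  leadingCoeffs_eq : ∀ i, leadingCoeffs H i = zmultiples (g i i)

theorem exists_isEchelonFamily [IsAddCyclic M] (H : AddSubgroup (ι →₀ M)) :
    ∃ g, IsEchelonFamily H g := by
  have hgen (i : ι) :
      ∃ f ∈ H, (∀ j, i < j → f j = 0) ∧ leadingCoeffs H i = zmultiples (f i) := by
    obtain ⟨d, hd⟩ := ((leadingCoeffs H i).isAddCyclic_iff_exists_zmultiples_eq_top).mp
      inferInstance
    obtain ⟨f, hfH, hf, rfl⟩ := mem_leadingCoeffs.mp (hd ▸ mem_zmultiples d)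
    exact ⟨f, hfH, hf, hd.symm⟩
  choose g hgH hg hgS using hgen
  exact ⟨g, ⟨hgH, hg, hgS⟩⟩

namespace IsEchelonFamily

variable {H : AddSubgroup (ι →₀ M)} {g : ι → ι →₀ M}

theorem mem_closure_of_mem [WellFoundedLT ι] (hg : IsEchelonFamily H g) {f : ι →₀ M} {i : ι}
    (hfH : f ∈ H) (hf : ∀ j, i < j → f j = 0) : f ∈ closure (g '' Set.Iic i) := by
  induction i using WellFoundedLT.induction generalizing f with
  | _ i ih =>
    obtain ⟨k, hk⟩ := mem_zmultiples_iff.mp <|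
      hg.leadingCoeffs_eq i ▸ mem_leadingCoeffs.mpr ⟨f, hfH, hf, rfl⟩
    set f' := f - k • g i
    have hf'H : f' ∈ H := H.sub_mem hfH (H.zsmul_mem (hg.mem i) k)
    have hf' : ∀ j, i ≤ j → f' j = 0 := by
      intro j hij
      rcases hij.eq_or_lt with rfl | hij
      · simp [f', hk]
      · simp [f', hf j hij, hg.apply_eq_zero_of_lt i j hij]
    have hf'mem : f' ∈ closure (g '' Set.Iic i) := by
      rcases eq_zero_or_exists_max_support f' with h0 | ⟨m, hm, hm'⟩
      · exact h0 ▸ zero_mem _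
      · have hmi : m < i := lt_of_not_ge fun him => hm (hf' m him)
        refine closure_mono ?_ (ih m hmi hf'H hm')
        rintro _ ⟨j, hj, rfl⟩
        exact ⟨j, Set.mem_Iic.mpr (hj.trans hmi.le), rfl⟩
    rw [← sub_add_cancel f (k • g i)]
    exact add_mem hf'mem (zsmul_mem (subset_closure (Set.mem_image_of_mem g Set.self_mem_Iic)) k)

theorem mem_and_forall_notMem_iff_mem_closure_image [WellFoundedLT ι]
    (hg : IsEchelonFamily H g) {S : Set ι} (hS : IsLowerSet S) {f : ι →₀ M} :
    (f ∈ H ∧ ∀ j ∉ S, f j = 0) ↔ f ∈ closure (g '' S) := by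
  constructor
  · rintro ⟨hfH, hf⟩
    rcases eq_zero_or_exists_max_support f with rfl | ⟨m, hm, hm'⟩
    · exact zero_mem _
    · have hmS : m ∈ S := of_not_not fun h => hm (hf m h)
      refine closure_mono ?_ (hg.mem_closure_of_mem hfH hm')
      rintro _ ⟨j, hjm, rfl⟩
      exact ⟨j, hS hjm hmS, rfl⟩
  · intro hf
    refine closure_induction (p := fun f _ => f ∈ H ∧ ∀ j ∉ S, f j = 0) ?_ ?_ ?_ ?_ hf
    · rintro _ ⟨k, hkS, rfl⟩
      exact ⟨hg.mem k, fun j hjS =>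
        hg.apply_eq_zero_of_lt k j (lt_of_not_ge fun hjk => hjS (hS hjk hkS))⟩
    · exact ⟨H.zero_mem, fun _ _ => rfl⟩
    · rintro a b - - ⟨haH, ha⟩ ⟨hbH, hb⟩
      exact ⟨H.add_mem haH hbH, fun j hj => by simp [ha j hj, hb j hj]⟩
    · rintro a - ⟨haH, ha⟩
      exact ⟨H.neg_mem haH, fun j hj => by simp [ha j hj]⟩

theorem eq_closure_range [WellFoundedLT ι] (hg : IsEchelonFamily H g) :
    H = closure (Set.range g) := by
  ext f
  simpa using hg.mem_and_forall_notMem_iff_mem_closure_image isLowerSet_univ (f := f)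

theorem apply_self_ne_zero [IsAddTorsionFree M] [Nontrivial M] [H.FiniteIndex]
    (hg : IsEchelonFamily H g) (i : ι) : g i i ≠ 0 := by
  obtain ⟨x, hx⟩ := exists_ne (0 : M)
  have hmem : H.index • x ∈ leadingCoeffs H i := by
    refine mem_leadingCoeffs.mpr
      ⟨H.index • single i x, H.nsmul_index_mem _, fun j hij => ?_, by simp⟩
    simp [single_eq_of_ne hij.ne']
  intro h0
  rw [hg.leadingCoeffs_eq i, h0, zmultiples_zero_eq_bot, mem_bot] at hmem
  exact smul_ne_zero FiniteIndex.index_ne_zero hx hmem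

section CommRing

variable {R : Type*} [CommRing R] {H : AddSubgroup (ι →₀ R)} {g : ι → ι →₀ R}

theorem single_one_notMem_sup_supported (hg : IsEchelonFamily H g) {a : ι}
    (ha : ¬IsUnit (g a a)) {s : Set ι} (hs : ∀ j ∈ s, j < a) :
    single a 1 ∉ H ⊔ (supported R ℤ s).toAddSubgroup := by
  intro hmem
  obtain ⟨h, hh, c, hc, hsum⟩ := mem_sup.mp hmem
  rw [Submodule.mem_toAddSubgroup, mem_supported'] at hc
  have hca : ∀ j, a ≤ j → c j = 0 := fun j hj => hc j fun hjs => (hs j hjs).not_ge hj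
  have hh_eq : h = single a 1 - c := eq_sub_of_add_eq hsum
  refine ha (isUnit_of_one_mem_zmultiples ?_)
  rw [← hg.leadingCoeffs_eq a]
  refine mem_leadingCoeffs.mpr ⟨h, hh, fun j hj => ?_, ?_⟩
  · simp [hh_eq, single_eq_of_ne hj.ne', hca j hj.le]
  · simp [hh_eq, hca a le_rfl]

theorem sup_supported_lt_sup_supported_insert (hg : IsEchelonFamily H g) {a : ι}
    (ha : ¬IsUnit (g a a)) {s : Set ι} (hs : ∀ j ∈ s, j < a) :
    H ⊔ (supported R ℤ s).toAddSubgroup <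
      H ⊔ (supported R ℤ (insert a s)).toAddSubgroup := by
  refine lt_of_le_of_ne (sup_le_sup_left (Submodule.toAddSubgroup_mono
    (supported_mono (Set.subset_insert a s))) _) fun heq =>
    hg.single_one_notMem_sup_supported ha hs ?_
  rw [heq]
  exact mem_sup_right (single_mem_supported ℤ 1 (Set.mem_insert a s))

theorem two_pow_card_mul_index_sup_le [H.FiniteIndex] (hg : IsEchelonFamily H g) (s : Finset ι)
    (hs : ∀ i ∈ s, ¬IsUnit (g i i)) :
    2 ^ s.card * (H ⊔ (supported R ℤ (s : Set ι)).toAddSubgroup).index ≤ H.index := by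
  classical
  induction s using Finset.induction_on_max with
  | empty => simp
  | insert a s has ih =>
    have hlt := hg.sup_supported_lt_sup_supported_insert (hs a (Finset.mem_insert_self a s)) has
    have : (H ⊔ (supported R ℤ (s : Set ι)).toAddSubgroup).FiniteIndex :=
      finiteIndex_of_le le_sup_left
    rw [Finset.coe_insert]
    calc 2 ^ (insert a s).card * _ = 2 ^ s.card * (2 * _) := by
          rw [Finset.card_insert_of_notMem fun has' => (has a has').false]
          ring
      _ ≤ 2 ^ s.card * (H ⊔ (supported R ℤ (s : Set ι)).toAddSubgroup).index :=
          Nat.mul_le_mul_left _ (two_mul_index_le_of_lt hlt)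
      _ ≤ H.index := ih fun i hi => hs i (Finset.mem_insert_of_mem hi)

theorem two_pow_card_le_index [H.FiniteIndex] (hg : IsEchelonFamily H g) (s : Finset ι)
    (hs : ∀ i ∈ s, ¬IsUnit (g i i)) : 2 ^ s.card ≤ H.index :=
  (Nat.le_mul_of_pos_right _ (finiteIndex_of_le le_sup_left).index_ne_zero.bot_lt).trans
    (hg.two_pow_card_mul_index_sup_le s hs)

theorem finite_setOf_not_isUnit [H.FiniteIndex] (hg : IsEchelonFamily H g) :
    {i | ¬IsUnit (g i i)}.Finite := by
  by_contra hinf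
  obtain ⟨t, hts, htf, htc⟩ := Set.Infinite.exists_subset_ncard_eq hinf H.index
  have := hg.two_pow_card_le_index htf.toFinset fun i hi => hts (htf.mem_toFinset.mp hi)
  rw [← Set.ncard_eq_toFinset_card t htf, htc] at this
  exact this.not_gt Nat.lt_two_pow_self

theorem natCard_setOf_not_isUnit_lt_index [H.FiniteIndex] (hg : IsEchelonFamily H g) :
    Nat.card {i | ¬IsUnit (g i i)} < H.index := by
  have hfin := hg.finite_setOf_not_isUnit
  rw [Nat.card_coe_set_eq, Set.ncard_eq_toFinset_card _ hfin]
  exact Nat.lt_two_pow_self.trans_le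
    (hg.two_pow_card_le_index _ fun i hi => hfin.mem_toFinset.mp hi)

end CommRing

end IsEchelonFamily

end Finsupp

/-- Structure of finite index subgroups of G = (Z/qZ)^{⊕N} for N ≤ ω
(with the convention Z₀ = Z, i.e. `ZMod 0 = ℤ`): there are triangular generators
g_i supported on {0,…,i} such that g_i(i) is non-invertible for fewer than [G:H]
indices, H ∩ G_i is generated by g_0,…,g_i, H is generated by all g_i, and if
q = 0 then g_i(i) ≠ 0 for all i. -/
theorem stmt_14 (q : ℕ) (N : ℕ∞)
    (H : AddSubgroup ({i : ℕ // (i : ℕ∞) < N} →₀ ZMod q)) (hH : H.FiniteIndex) :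
    ∃ g : {i : ℕ // (i : ℕ∞) < N} → ({i : ℕ // (i : ℕ∞) < N} →₀ ZMod q),
      (∀ i, ∀ j ∈ (g i).support, (j : ℕ) ≤ (i : ℕ)) ∧
      ({i | ¬ IsUnit ((g i) i)}.Finite ∧
        Nat.card {i | ¬ IsUnit ((g i) i)} < H.index) ∧
      (∀ i, ∀ f : {i : ℕ // (i : ℕ∞) < N} →₀ ZMod q,
        (f ∈ H ∧ ∀ j : {i : ℕ // (i : ℕ∞) < N}, (i : ℕ) < (j : ℕ) → f j = 0) ↔
          f ∈ AddSubgroup.closure {x | ∃ j : {i : ℕ // (i : ℕ∞) < N}, (j : ℕ) ≤ (i : ℕ) ∧ x = g j}) ∧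
      H = AddSubgroup.closure (Set.range g) ∧
      (q = 0 → ∀ i, (g i) i ≠ 0) := by
  obtain ⟨g, hg⟩ := Finsupp.exists_isEchelonFamily H
  refine ⟨g, fun i j hj => le_of_not_gt fun hij => mem_support_iff.mp hj
      (hg.apply_eq_zero_of_lt i j hij), ⟨hg.finite_setOf_not_isUnit,
      hg.natCard_setOf_not_isUnit_lt_index⟩, fun n f => ?_, hg.eq_closure_range, ?_⟩
  · have hS : IsLowerSet {j : {i : ℕ // (i : ℕ∞) < N} | (j : ℕ) ≤ n} :=
      fun _ _ hba ha => le_trans (Subtype.coe_le_coe.mpr hba) ha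
    simpa [Set.image, eq_comm] using hg.mem_and_forall_notMem_iff_mem_closure_image hS (f := f)
  · rintro rfl
    exact hg.apply_self_ne_zero
end

section
/- Let R = (Z/2Z)^{⊕ω} (finitely supported sequences, pointwise ring operations). For every finite index subgroup H of (R,+), the set R·H = {r·h : r ∈ R, h ∈ H} contains an ideal of R of finite index. -/
/-!
Finitely many coset representatives of `H` are all supported in some finite set `S`. Let `I` be
the ideal of sequences vanishing on `S`. For `x ∈ I` pick the representative `y` of `x + H`;
then `x * y = 0`, and since `x` is idempotent, `x = x * (x - y)` with `x - y ∈ H`.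
-/

open Pointwise

theorem mem_univ_mul_of_isIdempotentElem {R : Type*} [NonUnitalRing R] {H : AddSubgroup R}
    {x y : R} (hx : IsIdempotentElem x) (hxy : x * y = 0) (hmem : x - y ∈ H) :
    x ∈ Set.univ * (H : Set R) :=
  ⟨x, Set.mem_univ x, x - y, hmem, show x * (x - y) = x by rw [mul_sub, hx.eq, hxy, sub_zero]⟩

namespace Finsupp

variable {α M : Type*}

theorem exists_finset_forall_exists_support_subset_sub_mem [AddCommGroup M]
    (H : AddSubgroup (α →₀ M)) [H.FiniteIndex] :
    ∃ S : Finset α, ∀ x : α →₀ M, ∃ y : α →₀ M, y.support ⊆ S ∧ x - y ∈ H := by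
  classical
  have := Fintype.ofFinite ((α →₀ M) ⧸ H)
  let supp : (α →₀ M) ⧸ H → Finset α := fun c => c.out.support
  refine ⟨Finset.univ.biUnion supp, fun x => ⟨(x : (α →₀ M) ⧸ H).out,
    Finset.subset_biUnion_of_mem supp (Finset.mem_univ _), ?_⟩⟩
  exact QuotientAddGroup.eq_iff_sub_mem.mp (QuotientAddGroup.out_eq' (x : (α →₀ M) ⧸ H)).symm

noncomputable def restrictAddHom [AddZeroClass M] (S : Finset α) : (α →₀ M) →+ (S → M) :=
  AddMonoidHom.pi fun i => applyAddHom (i : α)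

theorem mem_ker_restrictAddHom [AddGroup M] {S : Finset α} {x : α →₀ M} :
    x ∈ (restrictAddHom S).ker ↔ ∀ i ∈ S, x i = 0 := by
  simp [restrictAddHom, funext_iff]

variable [NonUnitalNonAssocRing M] {S : Finset α} {x : α →₀ M}

theorem mul_mem_ker_restrictAddHom (hx : x ∈ (restrictAddHom S).ker) (r : α →₀ M) :
    r * x ∈ (restrictAddHom S).ker ∧ x * r ∈ (restrictAddHom S).ker := by
  simp only [mem_ker_restrictAddHom, mul_apply] at hx ⊢
  exact ⟨fun i hi => by rw [hx i hi, mul_zero], fun i hi => by rw [hx i hi, zero_mul]⟩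

theorem mul_eq_zero_of_mem_ker_restrictAddHom (hx : x ∈ (restrictAddHom S).ker) {y : α →₀ M}
    (hy : y.support ⊆ S) : x * y = 0 := by
  rw [mem_ker_restrictAddHom] at hx
  ext i
  by_cases hi : i ∈ S
  · simp [hx i hi]
  · simp [notMem_support_iff.mp (mt (@hy i) hi)]

end Finsupp

/-- For R = (Z/2Z)^{⊕ω} (finitely supported sequences, pointwise operations) and
any finite index additive subgroup H, the set R·H contains an ideal of R of
finite additive index. -/
theorem stmt_15 (H : AddSubgroup (ℕ →₀ ZMod 2)) (hH : H.FiniteIndex) :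
    ∃ I : AddSubgroup (ℕ →₀ ZMod 2),
      (∀ r x : ℕ →₀ ZMod 2, x ∈ I → r * x ∈ I ∧ x * r ∈ I) ∧
      I.FiniteIndex ∧
      (I : Set (ℕ →₀ ZMod 2)) ⊆ Set.univ * (H : Set (ℕ →₀ ZMod 2)) := by
  obtain ⟨S, hS⟩ := Finsupp.exists_finset_forall_exists_support_subset_sub_mem H
  refine ⟨(Finsupp.restrictAddHom S).ker, fun r x hx => Finsupp.mul_mem_ker_restrictAddHom hx r,
    AddSubgroup.finiteIndex_ker _, fun x hx => ?_⟩
  obtain ⟨y, hyS, hxy⟩ := hS x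
  have hidem : IsIdempotentElem x := by
    ext i
    exact (by decide : ∀ a : ZMod 2, a * a = a) (x i)
  exact mem_univ_mul_of_isIdempotentElem hidem
    (Finsupp.mul_eq_zero_of_mem_ker_restrictAddHom hx hyS) hxy
end

section
/- Let R = (Z/qZ)^{ω} for an integer q > 1 (the full product ring). For every finite index additive subgroup H of (R,+), the set R·H = {r·h : r ∈ R, h ∈ H} contains an ideal of R of index less than q^{[R:H]}. -/
/-!
Call `A ⊆ ι` good for `H` if some `h ∈ H` is a unit at every point of `A`; a function whose
support is good lies in `R·H`, since `x = (x h⁻¹) h`. Given a partition of `ι` into finitely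
many blocks, add blocks greedily to a set `E` until `H + R_E = R`, where `R_E` is the group of
functions supported in `E`: every step strictly enlarges `H + R_E`, so fewer than `n = [R:H]`
blocks are used, and then `1 = h + w` with `w ∈ R_E` gives an `h ∈ H` equal to `1` off `E`.
Hence any finitely many bad sets are pierced by fewer than `n` points, and by compactness of the
space of ultrafilters all bad sets are pierced by `n - 1` ultrafilters `p_j`. The functions
vanishing `p_j`-almost everywhere for every `j` form an ideal inside `R·H`; modulo the ideal
attached to a single `p_j` every function is congruent to a constant, so the index of their
intersection is at most `q ^ (n - 1)`.
-/

open Pointwise Filter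

theorem Finset.exists_fin_subset_range {α : Type*} [Nonempty α] (s : Finset α) {m : ℕ}
    (h : s.card ≤ m) : ∃ f : Fin m → α, ↑s ⊆ Set.range f := by
  obtain ⟨g⟩ : Nonempty (s ↪ Fin m) := Function.Embedding.nonempty_of_card_le (by simpa)
  exact ⟨Function.extend g Subtype.val fun _ => Classical.arbitrary α,
    fun a ha => ⟨g ⟨a, ha⟩, g.injective.extend_apply _ _ _⟩⟩

theorem Ultrafilter.exists_forall_mem_of_finite_piercing {ι : Type*} [Nonempty ι] {m : ℕ}
    (𝒜 : Set (Set ι))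
    (h : ∀ u : Finset (Set ι), (∀ A ∈ u, A ∈ 𝒜) →
      ∃ P : Finset ι, P.card ≤ m ∧ ∀ A ∈ u, ∃ i ∈ P, i ∈ A) :
    ∃ p : Fin m → Ultrafilter ι, ∀ A ∈ 𝒜, ∃ j, A ∈ p j := by
  have hclosed (A : 𝒜) : IsClosed {p : Fin m → Ultrafilter ι | ∃ j, A.1 ∈ p j} := by
    rw [Set.ofPred_exists]
    exact isClosed_iUnion_of_finite fun j =>
      (ultrafilter_isClosed_basic A.1).preimage
        (continuous_apply (A := fun _ : Fin m => Ultrafilter ι) j)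
  obtain ⟨p, hp⟩ := CompactSpace.iInter_nonempty hclosed fun u => by
    obtain ⟨P, hPm, hP⟩ := h (u.map (Function.Embedding.subtype _)) (by simp +contextual)
    obtain ⟨f, hf⟩ := P.exists_fin_subset_range hPm
    refine ⟨fun j => pure (f j), Set.mem_iInter₂.2 fun A hA => ?_⟩
    obtain ⟨i, hiP, hiA⟩ := hP A (Finset.mem_map_of_mem _ hA)
    obtain ⟨j, rfl⟩ := hf hiP
    exact ⟨j, hiA⟩
  exact ⟨p, fun A hA => Set.mem_iInter.1 hp ⟨A, hA⟩⟩

theorem Filter.Germ.mem_ker_coeRingHom {ι S : Type*} [Ring S] {l : Filter ι} {x : ι → S} :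
    x ∈ RingHom.ker (Germ.coeRingHom l) ↔ ∀ᶠ i in l, x i = 0 := by
  rw [RingHom.mem_ker, Germ.coe_coeRingHom, ← Germ.coe_zero]
  exact Germ.coe_eq

theorem Ultrafilter.surjective_mk_const {ι S : Type*} [Ring S] [Finite S] (U : Ultrafilter ι) :
    Function.Surjective fun a : S => (Function.const ι a :
      (ι → S) ⧸ (RingHom.ker (Germ.coeRingHom (U : Filter ι))).toAddSubgroup) := by
  rintro ⟨x⟩
  obtain ⟨a, ha⟩ := (U.map x).eq_pure_of_finite
  have hxa : x ⁻¹' {a} ∈ U := Ultrafilter.mem_map.1 (ha ▸ Ultrafilter.mem_pure.2 rfl)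
  refine ⟨a, QuotientAddGroup.eq.2 (Germ.mem_ker_coeRingHom.2 ?_)⟩
  exact Filter.mem_of_superset hxa fun i hi => by simp_all

namespace AddSubgroup

variable {ι S : Type*} [Ring S]

def HasUnitOn (H : AddSubgroup (ι → S)) (A : Set ι) : Prop :=
  ∃ h ∈ H, ∀ i ∈ A, IsUnit (h i)

variable (S) in
def supportedOn (A : Set ι) : AddSubgroup (ι → S) :=
  pi Aᶜ fun _ => ⊥

variable {H : AddSubgroup (ι → S)}

theorem HasUnitOn.mono {A B : Set ι} (hB : H.HasUnitOn B) (hAB : A ⊆ B) : H.HasUnitOn A :=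
  let ⟨h, hH, hu⟩ := hB
  ⟨h, hH, fun i hi => hu i (hAB hi)⟩

theorem mem_univ_mul_of_hasUnitOn_support {x : ι → S} (hx : H.HasUnitOn (Function.support x)) :
    x ∈ (Set.univ : Set (ι → S)) * H := by
  obtain ⟨h, hH, hu⟩ := hx
  refine ⟨fun i => x i * Ring.inverse (h i), trivial, h, hH, funext fun i => ?_⟩
  by_cases hxi : x i = 0
  · simp [hxi]
  · exact Ring.inverse_mul_cancel_right _ _ (hu i hxi)

theorem supportedOn_mono {A B : Set ι} (hAB : A ⊆ B) : supportedOn S A ≤ supportedOn S B :=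
  fun _ hx i hi => hx i fun hA => hi (hAB hA)

theorem iSup_supportedOn_fiber_eq_top {β : Type*} [Finite β] (τ : ι → β) :
    ⨆ c, supportedOn S (τ ⁻¹' {c}) = ⊤ := by
  classical
  cases nonempty_fintype β
  refine eq_top_iff.2 fun x _ => ?_
  have hx : x = ∑ c, fun i => if τ i = c then x i else 0 := by
    ext i
    simp [Finset.sum_apply]
  rw [hx]
  exact sum_mem fun c _ => mem_iSup_of_mem c fun i hi => if_neg hi

theorem hasUnitOn_compl_of_sup_supportedOn_eq_top {E : Set ι}
    (h : H ⊔ supportedOn S E = ⊤) : H.HasUnitOn Eᶜ := by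
  obtain ⟨y, hy, z, hz, hyz⟩ := mem_sup.1 (h ▸ mem_top (1 : ι → S))
  refine ⟨y, hy, fun i hi => ?_⟩
  have hzi : z i = 0 := hz i hi
  have hyi : y i = 1 := by simpa [hzi] using congrFun hyz i
  exact hyi ▸ isUnit_one

theorem exists_finset_card_lt_index_hasUnitOn [H.FiniteIndex] {β : Type*} [Finite β]
    (τ : ι → β) : ∃ K : Finset β, K.card < H.index ∧ H.HasUnitOn {i | τ i ∉ K} := by
  classical
  cases nonempty_fintype β
  set T : Finset β → AddSubgroup (ι → S) := fun K => H ⊔ supportedOn S (τ ⁻¹' K)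
  have hH (K : Finset β) : H ≤ T K := le_sup_left
  have hT (K : Finset β) : (T K).FiniteIndex := finiteIndex_of_le (hH K)
  -- Minimising `[R : T K]` subject to `|K| + [R : T K] ≤ n` replaces the greedy induction.
  obtain ⟨K, hK, hmin⟩ := Finset.exists_min_image {K | K.card + (T K).index ≤ H.index}
    (fun K => (T K).index) ⟨∅, by simpa using index_antitone (hH ∅)⟩
  rw [Finset.mem_filter_univ] at hK
  suffices hKtop : T K = ⊤ by
    refine ⟨K, ?_, hasUnitOn_compl_of_sup_supportedOn_eq_top hKtop⟩
    rw [hKtop, index_top] at hK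
    omega
  by_contra hne
  obtain ⟨c, hc⟩ : ∃ c, ¬ supportedOn S (τ ⁻¹' {c}) ≤ T K := by
    by_contra! h
    exact hne (eq_top_iff.2 ((iSup_supportedOn_fiber_eq_top τ).ge.trans (iSup_le h)))
  have hc_le : supportedOn S (τ ⁻¹' {c}) ≤ T (insert c K) :=
    le_sup_of_le_right (supportedOn_mono fun i hi => by simp_all)
  have hlt : T K < T (insert c K) :=
    lt_of_le_of_ne (sup_le_sup_left (supportedOn_mono fun i hi => by simp_all) _)
      fun heq => hc (heq ▸ hc_le)
  have hidx := index_strictAnti hlt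
  have hcard := Finset.card_insert_le c K
  have := hmin (insert c K) ((Finset.mem_filter_univ _).2 (by omega))
  omega

theorem exists_finset_card_lt_index_forall_exists_mem [Nonempty ι] [H.FiniteIndex]
    (u : Finset (Set ι)) (hu : ∀ A ∈ u, ¬ H.HasUnitOn A) :
    ∃ P : Finset ι, P.card < H.index ∧ ∀ A ∈ u, ∃ i ∈ P, i ∈ A := by
  classical
  set τ : ι → u → Prop := fun i A => i ∈ A.1
  obtain ⟨K, hK, hunit⟩ := exists_finset_card_lt_index_hasUnitOn (H := H) τ
  refine ⟨K.image (Function.invFun τ), Finset.card_image_le.trans_lt hK, fun A hA => ?_⟩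
  obtain ⟨i, hiA, hiK⟩ : ∃ i ∈ A, τ i ∈ K := by
    by_contra! h
    exact hu A hA (hunit.mono h)
  refine ⟨Function.invFun τ (τ i), Finset.mem_image_of_mem _ hiK, ?_⟩
  have := congrFun (Function.invFun_eq (f := τ) ⟨i, rfl⟩) ⟨A, hA⟩
  simpa [τ, this] using hiA

theorem exists_ultrafilters_mem_of_not_hasUnitOn [Nonempty ι] [H.FiniteIndex] :
    ∃ p : Fin (H.index - 1) → Ultrafilter ι, ∀ A, ¬ H.HasUnitOn A → ∃ j, A ∈ p j :=
  Ultrafilter.exists_forall_mem_of_finite_piercing {A | ¬ H.HasUnitOn A} fun u hu =>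
    let ⟨P, hP, hPu⟩ := exists_finset_card_lt_index_forall_exists_mem u hu
    ⟨P, by omega, hPu⟩

theorem exists_ideal_subset_univ_mul_index_le [Nonempty ι] [Finite S] [H.FiniteIndex] :
    ∃ I : Ideal (ι → S), (I : Set (ι → S)) ⊆ Set.univ * (H : Set (ι → S)) ∧
      I.toAddSubgroup.index ≠ 0 ∧ I.toAddSubgroup.index ≤ Nat.card S ^ (H.index - 1) := by
  obtain ⟨p, hp⟩ := exists_ultrafilters_mem_of_not_hasUnitOn (H := H)
  set I : Fin (H.index - 1) → Ideal (ι → S) := fun j =>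
    RingHom.ker (Germ.coeRingHom (p j : Filter ι))
  have hI : (⨅ j, I j).toAddSubgroup = ⨅ j, (I j).toAddSubgroup := by
    ext; simp [Submodule.mem_iInf, mem_iInf]
  have hfin (j) : Finite ((ι → S) ⧸ (I j).toAddSubgroup) :=
    Finite.of_surjective _ (p j).surjective_mk_const
  refine ⟨⨅ j, I j, fun x hx => mem_univ_mul_of_hasUnitOn_support ?_, ?_, ?_⟩
  · by_contra hbad
    obtain ⟨j, hj⟩ := hp _ hbad
    have hx0 : {i | x i = 0} ∈ p j := Germ.mem_ker_coeRingHom.1 ((Submodule.mem_iInf _).1 hx j)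
    exact (p j).compl_notMem_iff.2 hx0 hj
  · rw [hI]
    exact index_iInf_ne_zero fun j => index_ne_zero_of_finite
  · rw [hI]
    calc (⨅ j, (I j).toAddSubgroup).index ≤ ∏ j, (I j).toAddSubgroup.index := index_iInf_le _
      _ ≤ Nat.card S ^ (Finset.univ : Finset (Fin (H.index - 1))).card :=
        Finset.prod_le_pow_card _ _ _ fun j _ =>
          Nat.card_le_card_of_surjective _ (p j).surjective_mk_const
      _ = Nat.card S ^ (H.index - 1) := by simp

end AddSubgroup

/-- For R = (Z/qZ)^ω with q > 1 and any finite index additive subgroup H of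
(R,+), the set R·H contains an ideal of R of additive index less than q^[R:H]. -/
theorem stmt_16 (q : ℕ) (hq : 1 < q) (H : AddSubgroup (ℕ → ZMod q))
    (hH : H.FiniteIndex) :
    ∃ I : Ideal (ℕ → ZMod q),
      (I : Set (ℕ → ZMod q)) ⊆ Set.univ * (H : Set (ℕ → ZMod q)) ∧
      I.toAddSubgroup.index ≠ 0 ∧
      I.toAddSubgroup.index < q ^ H.index := by
  have : NeZero q := ⟨by omega⟩
  obtain ⟨I, hIH, hI0, hIq⟩ := H.exists_ideal_subset_univ_mul_index_le (ι := ℕ) (S := ZMod q)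
  refine ⟨I, hIH, hI0, hIq.trans_lt ?_⟩
  rw [Nat.card_zmod]
  exact Nat.pow_lt_pow_right hq (Nat.sub_one_lt hH.index_ne_zero)
end

section
/- Identify (Z/2Z)^X (X a finite set) with the Boolean ring (P(X), △, ∩). Let A_0,...,A_{n-1} be independent subsets of X (every Boolean combination ∩ (A_i)^{δ_i} with δ_i ∈ {0,1} is nonempty, together with A_n in the case stated), let H_n be the subgroup of (P(X), △) generated by A_0,...,A_{n-1}, and suppose A_0,...,A_{n-1} are independent. Then A_0 ∪ ⋯ ∪ A_{n-1} is not a sum (symmetric difference) of n−1 elements of the set P(X)·H_n = {Y ∩ h : Y ⊆ X, h ∈ H_n}, but it is a sum of n such elements. -/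
/-!
Write `e S` for the indicator of `S` in `X → ZMod 2`. Independence of `A₀, …, A_{n-1}` says
exactly that `x ↦ (e (A j) x)_j` maps `X` onto `(ZMod 2)ⁿ`. If `e (⋃ A) = ∑_{i < n-1} yᵢ hᵢ`
with each `hᵢ = ∑_j c_{ij} e (A j)` in `Hₙ`, the `(n-1) × n` matrix `c` kills some `δ ≠ 0`;
at a point `x` with `e (A j) x = δ_j` every `hᵢ` vanishes, yet `x ∈ ⋃ A`. Conversely,
`e (⋃ A)` is the sum of the indicators of the disjointed sets `A i \ ⋃_{j < i} A j`, and each of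
these lies in `P(X) · Hₙ` because it is a subset of `A i`.
-/

open Pointwise

theorem Set.surjective_indicator_of_iInter_nonempty {X : Type*} {n : ℕ} (A : Fin n → Set X)
    (hind : ∀ δ : Fin n → Bool, (⋂ i, if δ i then A i else (A i)ᶜ).Nonempty) :
    Function.Surjective fun x j => (A j).indicator (1 : X → ZMod 2) x := by
  intro δ
  obtain ⟨x, hx⟩ := hind fun j => δ j = 1
  refine ⟨x, funext fun j => ?_⟩
  have hxj := Set.mem_iInter.mp hx j
  obtain h | h : δ j = 0 ∨ δ j = 1 := by generalize δ j = a; revert a; decide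
  all_goals simp_all

theorem exists_forall_eq_zero_of_mem_span {K X : Type*} [Field K] {m n : ℕ} (hmn : m < n)
    (g : Fin n → X → K) (hg : Function.Surjective fun x j => g j x)
    (h : Fin m → X → K) (hh : ∀ i, h i ∈ Submodule.span K (Set.range g)) :
    ∃ x, (∀ i, h i x = 0) ∧ ∃ j, g j x ≠ 0 := by
  choose c hc using fun i => (Submodule.mem_span_range_iff_exists_fun K).mp (hh i)
  obtain ⟨δ, hδ, hδ0⟩ : ∃ δ ∈ LinearMap.ker (Matrix.of c).mulVecLin, δ ≠ 0 :=
    Submodule.exists_mem_ne_zero_of_ne_bot (LinearMap.ker_ne_bot_of_finrank_lt (by simpa))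
  obtain ⟨x, rfl⟩ := hg δ
  refine ⟨x, fun i => ?_, ?_⟩
  · rw [← hc i]
    simpa [Matrix.mulVec, dotProduct] using congrFun hδ i
  · by_contra! hzero
    exact hδ0 (funext hzero)

theorem sum_indicator_disjointed {X ι M : Type*} [Fintype ι] [LinearOrder ι]
    [LocallyFiniteOrderBot ι] [AddCommMonoid M] (A : ι → Set X) (f : X → M) :
    ∑ i, (disjointed A i).indicator f = (⋃ i, A i).indicator f := by
  rw [← iUnion_disjointed]
  ext x
  simpa using (Finset.indicator_biUnion_apply Finset.univ (disjointed A) (f := f)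
    ((disjoint_disjointed A).set_pairwise _) x).symm

section IndicatorZModTwo

variable {X : Type*} {n : ℕ} (A : Fin n → Set X)

theorem indicator_mem_univ_mul_closure {S : Set X} {i : Fin n} (hS : S ⊆ A i) :
    S.indicator 1 ∈ Set.univ * (AddSubgroup.closure
      (Set.range fun j => (A j).indicator (1 : X → ZMod 2)) : Set (X → ZMod 2)) := by
  refine ⟨S.indicator 1, trivial, (A i).indicator 1, AddSubgroup.subset_closure ⟨i, rfl⟩, ?_⟩
  show S.indicator 1 * (A i).indicator 1 = S.indicator 1
  rw [← Set.inter_indicator_one, Set.inter_eq_left.mpr hS]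

theorem sum_ne_indicator_iUnion {m : ℕ} (hmn : m < n)
    (hA : Function.Surjective fun x j => (A j).indicator (1 : X → ZMod 2) x)
    (f : Fin m → X → ZMod 2)
    (hf : ∀ i, f i ∈ Set.univ * (AddSubgroup.closure
      (Set.range fun j => (A j).indicator (1 : X → ZMod 2)) : Set (X → ZMod 2))) :
    ∑ i, f i ≠ (⋃ j, A j).indicator 1 := by
  choose y _ h hh hyh using fun i => Set.mem_mul.mp (hf i)
  have hspan : ∀ i, h i ∈ Submodule.span (ZMod 2) (Set.range fun j => (A j).indicator 1) :=
    fun i => AddSubgroup.closure_le (K := (Submodule.span _ _).toAddSubgroup) |>.mpr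
      Submodule.subset_span (hh i)
  obtain ⟨x, hx, j, hj⟩ := exists_forall_eq_zero_of_mem_span hmn _ hA h hspan
  have hxA : x ∈ ⋃ j, A j := Set.mem_iUnion.mpr ⟨j, Set.mem_of_indicator_ne_zero hj⟩
  intro hsum
  simpa [← hyh, hx, hxA] using congrFun hsum x

end IndicatorZModTwo

theorem stmt_17_general {X : Type*} (n : ℕ) (hn : 0 < n) (A : Fin n → Set X)
    (hind : ∀ δ : Fin n → Bool,
      (⋂ i, if δ i then A i else (A i)ᶜ).Nonempty) :
    let e : Set X → (X → ZMod 2) := fun S => S.indicator 1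
    let Hn : AddSubgroup (X → ZMod 2) :=
      AddSubgroup.closure (Set.range fun i => e (A i))
    (¬ ∃ f : Fin (n - 1) → (X → ZMod 2),
        (∀ i, f i ∈ Set.univ * (Hn : Set (X → ZMod 2))) ∧
        ∑ i, f i = e (⋃ i, A i)) ∧
    (∃ f : Fin n → (X → ZMod 2),
        (∀ i, f i ∈ Set.univ * (Hn : Set (X → ZMod 2))) ∧
        ∑ i, f i = e (⋃ i, A i)) := by
  intro e Hn
  have hA := Set.surjective_indicator_of_iInter_nonempty A hind
  refine ⟨fun ⟨f, hf, hsum⟩ => sum_ne_indicator_iUnion A (Nat.sub_one_lt_of_lt hn) hA f hf hsum,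
    fun i => e (disjointed A i), fun i => indicator_mem_univ_mul_closure A (disjointed_subset A i),
    sum_indicator_disjointed A 1⟩

/-- Identifying (Z/2Z)^X with (P(X), △, ∩) via indicators: if A₀,…,A_{n−1} are
independent subsets of the finite set X and Hₙ is the subgroup of (P(X),△) they
generate, then A₀ ∪ ⋯ ∪ A_{n−1} is not a sum of n−1 elements of P(X)·Hₙ, but it
is a sum of n such elements. -/
theorem stmt_17 {X : Type*} [Fintype X] (n : ℕ) (hn : 0 < n) (A : Fin n → Set X)
    (hind : ∀ δ : Fin n → Bool,
      (⋂ i, if δ i then A i else (A i)ᶜ).Nonempty) :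
    let e : Set X → (X → ZMod 2) := fun S => S.indicator 1
    let Hn : AddSubgroup (X → ZMod 2) :=
      AddSubgroup.closure (Set.range fun i => e (A i))
    (¬ ∃ f : Fin (n - 1) → (X → ZMod 2),
        (∀ i, f i ∈ Set.univ * (Hn : Set (X → ZMod 2))) ∧
        ∑ i, f i = e (⋃ i, A i)) ∧
    (∃ f : Fin n → (X → ZMod 2),
        (∀ i, f i ∈ Set.univ * (Hn : Set (X → ZMod 2))) ∧
        ∑ i, f i = e (⋃ i, A i)) :=
  stmt_17_general n hn A hind
end

section
/- For the ring R = (Z/2Z)^{ω} ≅ (P(ω), △, ∩) and every n ∈ ℕ there exists a finite index additive subgroup H of (R,+) such that the subgroup of (R,+) generated by R·H = {r·h : r ∈ R, h ∈ H} is not equal to the n-fold sumset (R·H)^{+n} = R·H + ⋯ + R·H. -/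
open Pointwise Module

/-!
Label the coordinates of `ℕ → 𝔽₂` by vectors of `V = 𝔽₂ⁿ⁺¹` so that every vector occurs and only
finitely many labels are nonzero, and let `H` consist of the functions that at each coordinate with
nonzero label `v` take the value `φ v` for one linear form `φ` on `V`; it has finite index.
A product `r * h` vanishes at every coordinate whose label lies in `ker φ`, and `n` linear forms on
`V` have a common nonzero zero, so a sum of `n` elements of `R·H` vanishes somewhere and is not `1`.
Yet `1` lies in the subgroup generated by `R·H`: the indicator of the coordinates labelled `0` is
in `H`, and the unit vector at a coordinate labelled `v ≠ 0` is `r * h` for a form with `φ v = 1`.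
-/

section FormSubgroup

variable {K V ι : Type*} [Field K] [AddCommGroup V] [Module K V]

variable (K) in
def formSubgroup (p : ι → V) : AddSubgroup (ι → K) where
  carrier := {h | ∃ φ : Dual K V, ∀ i, p i ≠ 0 → h i = φ (p i)}
  add_mem' := by
    rintro _ _ ⟨φ, hφ⟩ ⟨ψ, hψ⟩
    exact ⟨φ + ψ, fun i hi => by simp [hφ i hi, hψ i hi]⟩
  zero_mem' := ⟨0, by simp⟩
  neg_mem' := by
    rintro _ ⟨φ, hφ⟩
    exact ⟨-φ, fun i hi => by simp [hφ i hi]⟩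

theorem formSubgroup_finiteIndex [Finite K] {p : ι → V} (hp : (Function.support p).Finite) :
    (formSubgroup K p).FiniteIndex := by
  have : Finite (Function.support p) := hp
  let restrict : (ι → K) →+ (Function.support p → K) :=
    (LinearMap.funLeft K K Subtype.val).toAddMonoidHom
  refine AddSubgroup.finiteIndex_of_le (H := restrict.ker) fun h hh => ⟨0, fun i hi => ?_⟩
  exact congrFun hh ⟨i, hi⟩

theorem one_mem_closure_univ_mul_formSubgroup {p : ι → V} (hp : (Function.support p).Finite) :
    (1 : ι → K) ∈ AddSubgroup.closure (Set.univ * (formSubgroup K p : Set (ι → K))) := by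
  classical
  set S := AddSubgroup.closure (Set.univ * (formSubgroup K p : Set (ι → K)))
  have zeroLocus_mem : (fun i => if p i = 0 then 1 else 0 : ι → K) ∈ S :=
    AddSubgroup.subset_closure ⟨1, trivial, _, ⟨0, fun i hi => by simp [hi]⟩, one_mul _⟩
  have single_mem (i : ι) (hi : p i ≠ 0) : Pi.single i 1 ∈ S := by
    obtain ⟨φ, hφ⟩ := Projective.exists_dual_eq_one K hi
    refine AddSubgroup.subset_closure
      ⟨Pi.single i 1, trivial, fun j => φ (p j), ⟨φ, fun _ _ => rfl⟩, ?_⟩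
    change Pi.single i 1 * _ = _
    rw [← Pi.single_mul_left, hφ, one_mul]
  have decomp : (1 : ι → K) =
      (fun i => if p i = 0 then 1 else 0) + ∑ i ∈ hp.toFinset, Pi.single i 1 := by
    ext j
    by_cases hj : p j = 0 <;> simp [Finset.sum_apply, Pi.single_apply, hj]
  rw [decomp]
  exact S.add_mem zeroLocus_mem (S.sum_mem fun i hi => single_mem i (hp.mem_toFinset.1 hi))

theorem exists_dual_of_mem_univ_mul_formSubgroup {p : ι → V} {x : ι → K}
    (hx : x ∈ Set.univ * (formSubgroup K p : Set (ι → K))) :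
    ∃ φ : Dual K V, ∀ i, p i ≠ 0 → φ (p i) = 0 → x i = 0 := by
  obtain ⟨r, -, h, ⟨φ, hφ⟩, rfl⟩ := hx
  exact ⟨φ, fun i hi hφi => by simp [hφ i hi, hφi]⟩

theorem exists_ne_zero_forall_dual_apply_eq_zero [FiniteDimensional K V] {n : ℕ}
    (hn : n < finrank K V) (φ : Fin n → Dual K V) : ∃ v ≠ 0, ∀ i, φ i v = 0 := by
  have hker : LinearMap.ker (LinearMap.pi φ) ≠ ⊥ :=
    LinearMap.ker_ne_bot_of_finrank_lt (by rwa [Module.finrank_fin_fun])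
  obtain ⟨v, hv, hv0⟩ := Submodule.exists_mem_ne_zero_of_ne_bot hker
  exact ⟨v, hv0, fun i => congrFun (LinearMap.mem_ker.1 hv) i⟩

theorem exists_sum_apply_eq_zero_of_mem_univ_mul_formSubgroup [FiniteDimensional K V]
    {n : ℕ} (hn : n < finrank K V) {p : ι → V} (hp : ∀ v ≠ 0, ∃ i, p i = v)
    (f : Fin n → ι → K) (hf : ∀ k, f k ∈ Set.univ * (formSubgroup K p : Set (ι → K))) :
    ∃ i, (∑ k, f k) i = 0 := by
  choose φ hφ using fun k => exists_dual_of_mem_univ_mul_formSubgroup (hf k)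
  obtain ⟨v, hv, hφv⟩ := exists_ne_zero_forall_dual_apply_eq_zero hn φ
  obtain ⟨i, rfl⟩ := hp v hv
  exact ⟨i, by simp [Finset.sum_apply, fun k => hφ k i hv (hφv k)]⟩

end FormSubgroup

theorem exists_surjective_nat_finite_support (V : Type*) [Finite V] [Zero V] :
    ∃ p : ℕ → V, Function.Surjective p ∧ (Function.support p).Finite := by
  have := Fintype.ofFinite V
  refine ⟨fun k => if h : k < Fintype.card V then (Fintype.equivFin V).symm ⟨k, h⟩ else 0,
    fun v => ⟨Fintype.equivFin V v, by simp⟩, (Set.finite_Iio (Fintype.card V)).subset ?_⟩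
  intro k hk
  by_contra h
  exact hk (dif_neg h)

/-- For R = (Z/2Z)^ω and every n there is a finite index additive subgroup H of
(R,+) such that the subgroup generated by R·H is not the n-fold sumset of R·H. -/
theorem stmt_18 (n : ℕ) :
    ∃ H : AddSubgroup (ℕ → ZMod 2), H.FiniteIndex ∧
      (AddSubgroup.closure (Set.univ * (H : Set (ℕ → ZMod 2))) :
          Set (ℕ → ZMod 2)) ≠
        {x : ℕ → ZMod 2 | ∃ f : Fin n → (ℕ → ZMod 2),
          (∀ i, f i ∈ Set.univ * (H : Set (ℕ → ZMod 2))) ∧ ∑ i, f i = x} := by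
  obtain ⟨p, hsurj, hfin⟩ := exists_surjective_nat_finite_support (Fin (n + 1) → ZMod 2)
  refine ⟨formSubgroup (ZMod 2) p, formSubgroup_finiteIndex hfin, fun hclosure => ?_⟩
  have hone := one_mem_closure_univ_mul_formSubgroup (K := ZMod 2) hfin
  rw [← SetLike.mem_coe, hclosure] at hone
  obtain ⟨f, hf, hsum⟩ := hone
  obtain ⟨i, hi⟩ := exists_sum_apply_eq_zero_of_mem_univ_mul_formSubgroup
    (by simp) (fun v _ => hsurj v) f hf
  rw [hsum] at hi
  exact one_ne_zero hi
end

section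
/- Let R be the free commutative nilpotent ring of nilpotency class 3 and characteristic 2 on generators X_0, X_1, .... Define the group homomorphism h : (R,+) → Z/2Z sending Σ a_i X_i + Σ_{j ≤ i} a_{ji} X_j X_i to Σ_i a_{2i+1} + Σ_{j ≥ 0} Σ_{i ∈ 2^j·ℕ_{>0}} a_{ji}, and let H = ker h, an index-2 subgroup of (R,+). Then H does not contain any ideal of R of finite index; consequently, since R·H·R = {0} by 3-nilpotency, H + R·H·R = H contains no finite index ideal. -/
/-- A concrete model of the free commutative nilpotent ring of class 3 and
characteristic 2 on generators X₀, X₁, …: elements are pairs (linear part,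
quadratic part), where the linear part is a finitely supported ZMod 2-vector
indexed by ℕ (coefficients of the Xᵢ) and the quadratic part is indexed by
pairs j ≤ i (coefficients of the XⱼXᵢ). -/
abbrev NilRing : Type :=
  (ℕ →₀ ZMod 2) × ({p : ℕ × ℕ // p.1 ≤ p.2} →₀ ZMod 2)

/-- The quadratic part of the product of two linear parts. -/
noncomputable def nilQuad (a a' : ℕ →₀ ZMod 2) :
    {p : ℕ × ℕ // p.1 ≤ p.2} →₀ ZMod 2 :=
  a.sum fun i c => a'.sum fun j c' =>
    Finsupp.single ⟨(min i j, max i j), min_le_max⟩ (c * c')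

/-- Multiplication in the free class-3 nilpotent ring: products of quadratic
parts vanish, products of linear parts land in the quadratic part. -/
noncomputable instance : Mul NilRing := ⟨fun x y => (0, nilQuad x.1 y.1)⟩

/-- The functional h: the mod-2 sum of the coefficients a_{2i+1} of the
odd-indexed linear monomials plus all coefficients a_{ji} of quadratic
monomials XⱼXᵢ with i a positive multiple of 2^j. -/
noncomputable def nilH (x : NilRing) : ZMod 2 :=
  x.1.sum (fun i c => if i % 2 = 1 then c else 0) +
  x.2.sum (fun p c => if 0 < p.val.2 ∧ 2 ^ p.val.1 ∣ p.val.2 then c else 0)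

/-!
If an ideal `I ⊆ H` had finite index, two of the infinitely many generators would agree
modulo `I`, so `X a - X b ∈ I` for some `a ≠ b`, and then `X c * (X a - X b) ∈ I` for every `c`.
For `a < b` take `c = 2^a (2b + 1)`: then `2^a ∣ c` but `2^b ∤ c`, so `h (X c * X a) = 1` while
`h (X c * X b) = 0`, and `X c * (X a - X b) ∉ H`.
-/

theorem Nat.not_two_pow_succ_dvd_two_pow_mul_odd (u m : ℕ) :
    ¬ 2 ^ (u + 1) ∣ 2 ^ u * (2 * m + 1) := by
  rw [pow_succ, Nat.mul_dvd_mul_iff_left (by positivity)]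
  omega

namespace NilRing

noncomputable def X (n : ℕ) : NilRing := (Finsupp.single n 1, 0)

noncomputable def nilHAddHom : NilRing →+ ZMod 2 where
  toFun := nilH
  map_zero' := by simp [nilH]
  map_add' x y := by
    simp only [nilH, Prod.fst_add, Prod.snd_add]
    rw [Finsupp.sum_add_index' (by simp) (fun _ _ _ => by split <;> simp),
      Finsupp.sum_add_index' (by simp) (fun _ _ _ => by split <;> simp)]
    abel

theorem nilHAddHom_apply (x : NilRing) : nilHAddHom x = nilH x := rfl

theorem mul_def (x y : NilRing) : x * y = (0, nilQuad x.1 y.1) := rfl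

theorem mul_mul_eq_zero (x y z : NilRing) : x * y * z = 0 := by
  simp [mul_def, nilQuad]

theorem nilQuad_sub_right (a b b' : ℕ →₀ ZMod 2) :
    nilQuad a (b - b') = nilQuad a b - nilQuad a b' := by
  simp only [nilQuad]
  rw [← Finsupp.sum_sub]
  refine Finsupp.sum_congr fun i _ => Finsupp.sum_sub_index fun _ _ _ => ?_
  rw [mul_sub, Finsupp.single_sub]

protected theorem mul_sub (r x y : NilRing) : r * (x - y) = r * x - r * y := by
  simp [mul_def, nilQuad_sub_right]

theorem X_mul_X_of_le {a c : ℕ} (h : a ≤ c) :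
    X c * X a = (0, Finsupp.single ⟨(a, c), h⟩ 1) := by
  have hp : (⟨(min c a, max c a), min_le_max⟩ : {p : ℕ × ℕ // p.1 ≤ p.2}) = ⟨(a, c), h⟩ := by
    simp [h]
  simp only [mul_def, X, nilQuad]
  rw [Finsupp.sum_single_index (by simp), Finsupp.sum_single_index (by simp), hp, one_mul]

theorem nilH_X (n : ℕ) : nilH (X n) = if n % 2 = 1 then 1 else 0 := by
  simp [nilH, X]

theorem nilH_X_mul_X_of_le {a c : ℕ} (h : a ≤ c) :
    nilH (X c * X a) = if 0 < c ∧ 2 ^ a ∣ c then 1 else 0 := by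
  simp [X_mul_X_of_le h, nilH]

theorem nilHAddHom_surjective : Function.Surjective nilHAddHom := by
  intro z
  fin_cases z
  · exact ⟨0, map_zero _⟩
  · exact ⟨X 1, by simp [nilHAddHom_apply, nilH_X]; rfl⟩

theorem index_ker_nilHAddHom : nilHAddHom.ker.index = 2 := by
  rw [AddSubgroup.index_ker, AddMonoidHom.range_eq_top.mpr nilHAddHom_surjective,
    Nat.card_congr AddSubgroup.topEquiv.toEquiv, Nat.card_zmod]

theorem exists_nilH_X_mul_X_ne {a b : ℕ} (hab : a ≠ b) :
    ∃ c, nilH (X c * X a) ≠ nilH (X c * X b) := by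
  wlog hlt : a < b generalizing a b
  · obtain ⟨c, hc⟩ := this hab.symm (by omega)
    exact ⟨c, hc.symm⟩
  set c := 2 ^ a * (2 * b + 1)
  have hbc : b < c := lt_of_lt_of_le (by omega) (Nat.le_mul_of_pos_left _ (by positivity))
  have hndvd : ¬ 2 ^ b ∣ c := fun h =>
    Nat.not_two_pow_succ_dvd_two_pow_mul_odd a b ((pow_dvd_pow 2 hlt).trans h)
  refine ⟨c, ?_⟩
  rw [nilH_X_mul_X_of_le (by omega), nilH_X_mul_X_of_le hbc.le,
    if_pos ⟨by omega, dvd_mul_right _ _⟩, if_neg fun h => hndvd h.2]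
  decide

theorem exists_X_sub_X_mem (I : AddSubgroup NilRing) [I.FiniteIndex] :
    ∃ a b, a ≠ b ∧ X a - X b ∈ I := by
  obtain ⟨a, b, hab, h⟩ :=
    Finite.exists_ne_map_eq_of_infinite fun n => (X n : NilRing ⧸ I)
  exact ⟨a, b, hab, QuotientAddGroup.eq_iff_sub_mem.mp h⟩

theorem not_le_ker_nilHAddHom_of_finiteIndex (I : AddSubgroup NilRing) [I.FiniteIndex]
    (hmul : ∀ r x : NilRing, x ∈ I → r * x ∈ I) : ¬ I ≤ nilHAddHom.ker := by
  intro hle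
  obtain ⟨a, b, hab, hmem⟩ := exists_X_sub_X_mem I
  obtain ⟨c, hc⟩ := exists_nilH_X_mul_X_ne hab
  have := hle (hmul (X c) _ hmem)
  rw [AddMonoidHom.mem_ker, NilRing.mul_sub, map_sub, sub_eq_zero] at this
  exact hc this

end NilRing

open NilRing in
/-- In the free commutative nilpotent ring of class 3 and characteristic 2 on
X₀, X₁, …, all triple products vanish, and the kernel H of the functional h is
an index-2 additive subgroup which contains no (two-sided) ideal of finite
index; consequently H + R·H·R = H contains no finite index ideal. -/
theorem stmt_19 :
    (∀ x y z : NilRing, x * y * z = 0) ∧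
    ∃ Hgrp : AddSubgroup NilRing,
      (Hgrp : Set NilRing) = {x : NilRing | nilH x = 0} ∧
      Hgrp.index = 2 ∧
      ¬ ∃ I : AddSubgroup NilRing,
          (∀ r x : NilRing, x ∈ I → r * x ∈ I ∧ x * r ∈ I) ∧
          I.FiniteIndex ∧
          (I : Set NilRing) ⊆ (Hgrp : Set NilRing) := by
  refine ⟨mul_mul_eq_zero, nilHAddHom.ker, rfl, index_ker_nilHAddHom, ?_⟩
  rintro ⟨I, hmul, hfin, hsub⟩
  exact not_le_ker_nilHAddHom_of_finiteIndex I (fun r x hx => (hmul r x hx).1) hsub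
end
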